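/- arXiv:2404.00700 — 11 statements merged into one kernel-verified Lean document; each statement's English description precedes it below -/
import Mathlib

section
/- Let ν be a locally finite Borel measure on ℝ (finite on compact sets) and let Δ ∈ ℝ. Assume that for ν-almost every s ∈ ℝ one has (1/t)·log ν([s − e^{−t}, s + e^{−t}]) → −Δ as t → ∞. For n ∈ ℕ and s ∈ ℝ let τ̃ₙ(s) denote the unique dyadic interval [m·2^{−n}, (m+1)·2^{−n}) (m ∈ ℤ) containing s, and define uₙ(s) = −(1/n)·log ν(τ̃ₙ(s)) (which is finite for ν-almost every s). Then uₙ converges to Δ·log 2 locally in L¹(ν): for every bounded interval I ⊆ ℝ, ∫_I |uₙ(s) − Δ·log 2| dν(s) → 0 as n → ∞. -/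
/-!
Write `uₙ s = -(1/n) log ν(τ̃ₙ s)` (`dyadicLogRate`) and `Bₙ s = [s - 2⁻ⁿ, s + 2⁻ⁿ]`, so that
`τ̃ₙ s ⊆ Bₙ s` and `Bₙ s` is covered by `τ̃ₙ s` and its two neighbours. The hypothesis, read at
`t = n log 2`, says `-(1/n) log ν(Bₙ s) → Δ log 2`. The level-`n` intervals in a compact window
whose mass is less than `e^{-nε}` times the mass of their neighbourhood carry total mass
`O(e^{-nε})`; by Borel–Cantelli, for a.e. `s` eventually `ν(Bₙ s) ≤ e^{nε} ν(τ̃ₙ s)`, hence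
`uₙ → Δ log 2` almost everywhere.

On `[a, b]` the `uₙ` are bounded below, since every interval involved has mass at most
`ν[a - 1, b + 1]`. Their upper tail is negligible: on an interval of mass `x` where `uₙ > 1`
we have `x < e^{-n}`, so `(uₙ - 1) x ≤ -(1/n) x log x ≤ e^{-n}`, and there are `O(2ⁿ)` such
intervals. Dominated convergence for the truncations of `|uₙ - Δ log 2|` does the rest.
-/

open MeasureTheory Filter

/-- The dyadic interval of level `n` containing `s`:
`[m·2⁻ⁿ, (m+1)·2⁻ⁿ)` where `m = ⌊s·2ⁿ⌋`. -/
noncomputable def dyadicInterval (n : ℕ) (s : ℝ) : Set ℝ :=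
  Set.Ico ((⌊s * 2 ^ n⌋ : ℝ) / 2 ^ n) (((⌊s * 2 ^ n⌋ : ℝ) + 1) / 2 ^ n)

open Set Real
open scoped ENNReal Topology

theorem ofReal_le_ofReal_min_add_ofReal_sub (x M : ℝ) :
    ENNReal.ofReal x ≤ ENNReal.ofReal (min x M) + ENNReal.ofReal (x - M) := by
  rcases le_total x M with h | h
  · rw [min_eq_left h]
    exact le_self_add
  · rw [min_eq_right h]
    calc ENNReal.ofReal x = ENNReal.ofReal (M + (x - M)) := by rw [add_sub_cancel]
      _ ≤ ENNReal.ofReal M + ENNReal.ofReal (x - M) := ENNReal.ofReal_add_le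

theorem ofReal_abs_sub_sub_le_ofReal_sub_one {u L K : ℝ} (hu : -K ≤ u) (hK : 0 ≤ K) :
    ENNReal.ofReal (|u - L| - (K + |L| + 1)) ≤ ENNReal.ofReal (u - 1) := by
  refine ENNReal.ofReal_le_ofReal_iff'.2 ?_
  rcases le_total L u with h | h
  · left
    rw [abs_of_nonneg (sub_nonneg.2 h)]
    linarith [neg_le_abs L]
  · right
    rw [abs_of_nonpos (sub_nonpos.2 h)]
    linarith [le_abs_self L]

theorem tendsto_integral_of_ae_tendsto_zero_of_tendsto_lintegral_sub {α : Type*}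
    [MeasurableSpace α] {μ : Measure α} [IsFiniteMeasure μ] {f : ℕ → α → ℝ} (M : ℝ)
    (hf_meas : ∀ n, Measurable (f n)) (hf_nonneg : ∀ n x, 0 ≤ f n x)
    (hf_lim : ∀ᵐ x ∂μ, Tendsto (fun n => f n x) atTop (𝓝 0))
    (h_tail : Tendsto (fun n => ∫⁻ x, ENNReal.ofReal (f n x - M) ∂μ) atTop (𝓝 0)) :
    Tendsto (fun n => ∫ x, f n x ∂μ) atTop (𝓝 0) := by
  have h_trunc_meas : ∀ n, Measurable fun x => ENNReal.ofReal (min (f n x) M) := fun n =>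
    ((hf_meas n).min measurable_const).ennreal_ofReal
  have h_trunc : Tendsto (fun n => ∫⁻ x, ENNReal.ofReal (min (f n x) M) ∂μ) atTop (𝓝 0) := by
    have h0 : ENNReal.ofReal (min 0 M) = 0 := ENNReal.ofReal_of_nonpos (min_le_left 0 M)
    have hdom := tendsto_lintegral_of_dominated_convergence (fun _ => ENNReal.ofReal M) h_trunc_meas
      (fun n => Eventually.of_forall fun x => ENNReal.ofReal_le_ofReal (min_le_right _ _))
      (by simp [lintegral_const, ENNReal.mul_eq_top])
      (hf_lim.mono fun x hx => ((ENNReal.continuous_ofReal.comp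
        (continuous_id.min continuous_const)).tendsto' 0 0 h0).comp hx)
    simpa using hdom
  have h_lint : Tendsto (fun n => ∫⁻ x, ENNReal.ofReal (f n x) ∂μ) atTop (𝓝 0) := by
    have h_sum := h_trunc.add h_tail
    rw [add_zero] at h_sum
    refine tendsto_of_tendsto_of_tendsto_of_le_of_le tendsto_const_nhds h_sum
      (fun _ => zero_le) fun n => ?_
    calc ∫⁻ x, ENNReal.ofReal (f n x) ∂μ
        ≤ ∫⁻ x, ENNReal.ofReal (min (f n x) M) + ENNReal.ofReal (f n x - M) ∂μ :=
          lintegral_mono fun x => ofReal_le_ofReal_min_add_ofReal_sub _ M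
      _ = _ := lintegral_add_left (h_trunc_meas n) _
  have h_real := (ENNReal.tendsto_toReal ENNReal.zero_ne_top).comp h_lint
  rw [ENNReal.toReal_zero] at h_real
  exact h_real.congr fun n => (integral_eq_lintegral_of_nonneg_ae
    (Eventually.of_forall (hf_nonneg n)) (hf_meas n).aestronglyMeasurable).symm

theorem tendsto_neg_inv_mul_log_of_exp_neg_mul_le {x y : ℕ → ℝ} {L : ℝ} (hx : ∀ n, 0 < x n)
    (hxy : ∀ n, x n ≤ y n) (hyx : ∀ ε > 0, ∀ᶠ n : ℕ in atTop, exp (-(n * ε)) * y n ≤ x n)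
    (hy : Tendsto (fun n : ℕ => -(1 / (n : ℝ)) * log (y n)) atTop (𝓝 L)) :
    Tendsto (fun n : ℕ => -(1 / (n : ℝ)) * log (x n)) atTop (𝓝 L) := by
  set d : ℕ → ℝ := fun n => 1 / (n : ℝ) * (log (y n) - log (x n))
  have hd_nonneg : ∀ n, 0 ≤ d n := fun n =>
    mul_nonneg (by positivity) (sub_nonneg.2 (log_le_log (hx n) (hxy n)))
  have hd_le : ∀ ε > 0, ∀ᶠ n in atTop, d n ≤ ε := by
    intro ε hε
    filter_upwards [hyx ε hε, eventually_gt_atTop 0] with n hn hn_pos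
    have hn0 : (0 : ℝ) < n := Nat.cast_pos.2 hn_pos
    have hlog := log_le_log (mul_pos (exp_pos _) ((hx n).trans_le (hxy n))) hn
    rw [log_mul (exp_pos _).ne' ((hx n).trans_le (hxy n)).ne', log_exp] at hlog
    calc d n ≤ 1 / n * (n * ε) := mul_le_mul_of_nonneg_left (by linarith) (by positivity)
      _ = ε := by field_simp
  have hd : Tendsto d atTop (𝓝 0) := tendsto_order.2
    ⟨fun a ha => Eventually.of_forall fun n => ha.trans_le (hd_nonneg n),
      fun a ha => (hd_le (a / 2) (half_pos ha)).mono fun n hn => hn.trans_lt (half_lt_self ha)⟩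
  have hsum := hy.add hd
  rw [add_zero] at hsum
  exact hsum.congr fun n => by ring

theorem tendsto_neg_inv_mul_comp_mul_log_two {g : ℝ → ℝ} {Δ : ℝ}
    (h : Tendsto (fun t => (1 / t) * g t) atTop (𝓝 (-Δ))) :
    Tendsto (fun n : ℕ => -(1 / (n : ℝ)) * g (n * log 2)) atTop (𝓝 (Δ * log 2)) := by
  have hlim := (h.comp (tendsto_natCast_atTop_atTop.atTop_mul_const (log_pos one_lt_two))).const_mul
    (-log 2)
  rw [neg_mul_neg, mul_comm] at hlim
  refine hlim.congr fun n => ?_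
  rcases eq_or_ne (n : ℝ) 0 with hn | hn
  · simp [hn]
  · simp only [Function.comp_apply]
    field_simp

theorem neg_abs_log_le_neg_inv_mul_log {x C : ℝ} (hx : 0 ≤ x) (hxC : x ≤ C) (n : ℕ) :
    -|log C| ≤ -(1 / (n : ℝ)) * log x := by
  rcases hx.eq_or_lt with rfl | hx0
  · simp
  have hlog : log x ≤ |log C| := (log_le_log hx0 hxC).trans (le_abs_self _)
  have hn0 : 0 ≤ 1 / (n : ℝ) := by positivity
  have hn1 : 1 / (n : ℝ) ≤ 1 := by
    rcases Nat.eq_zero_or_pos n with rfl | hn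
    · simp
    · exact div_le_one_of_le₀ (by exact_mod_cast hn) (Nat.cast_nonneg n)
  rcases le_total 0 (log x) with h | h <;> nlinarith [abs_nonneg (log C)]

theorem neg_inv_mul_log_sub_one_mul_le {x : ℝ} (hx : 0 ≤ x) {n : ℕ} (hn : 1 ≤ n) :
    (-(1 / (n : ℝ)) * log x - 1) * x ≤ exp (-n) := by
  have hn1 : (1 : ℝ) ≤ n := by exact_mod_cast hn
  by_cases hu : -(1 / (n : ℝ)) * log x ≤ 1
  · exact (mul_nonpos_of_nonpos_of_nonneg (by linarith) hx).trans (exp_pos _).le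
  push Not at hu
  have hlog : log x < -n := by
    have : (n : ℝ) * (-(1 / (n : ℝ)) * log x) = -log x := by field_simp
    nlinarith
  have hx0 : 0 < x := hx.lt_of_ne fun h => by rw [← h, log_zero] at hlog; linarith
  have hxe : x ≤ exp (-n) := ((log_lt_iff_lt_exp hx0).1 hlog).le
  have hmono : exp (-n) * log (exp (-n)) ≤ x * log x :=
    mul_log_strictAntiOn.antitoneOn ⟨hx, hxe.trans (exp_le_exp.2 (by linarith))⟩
      ⟨(exp_pos _).le, exp_le_exp.2 (by linarith)⟩ hxe
  rw [log_exp] at hmono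
  calc (-(1 / (n : ℝ)) * log x - 1) * x ≤ -(1 / (n : ℝ)) * (x * log x) := by nlinarith
    _ ≤ -(1 / (n : ℝ)) * (exp (-n) * -n) :=
        mul_le_mul_of_nonpos_left hmono (by simp only [one_div, neg_nonpos]; positivity)
    _ = exp (-n) := by field_simp

theorem tendsto_mul_two_pow_add_mul_exp_neg (A B : ℝ) :
    Tendsto (fun n : ℕ => (A * 2 ^ n + B) * exp (-n)) atTop (𝓝 0) := by
  have h2e : 2 * exp (-1) < 1 := by
    rw [exp_neg, ← div_eq_mul_inv, div_lt_one (exp_pos 1)]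
    linarith [add_one_lt_exp one_ne_zero]
  have hlim := ((tendsto_pow_atTop_nhds_zero_of_lt_one (by positivity) h2e).const_mul A).add
    ((tendsto_pow_atTop_nhds_zero_of_lt_one (exp_pos _).le
      (exp_lt_one_iff.2 neg_one_lt_zero)).const_mul B)
  rw [mul_zero, mul_zero, add_zero] at hlim
  refine hlim.congr fun n => ?_
  rw [mul_pow, ← exp_nat_mul, mul_neg_one]
  ring

noncomputable def dyadicIco (n : ℕ) (m : ℤ) : Set ℝ :=
  Ico ((m : ℝ) / 2 ^ n) (((m : ℝ) + 1) / 2 ^ n)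

theorem dyadicInterval_eq_dyadicIco (n : ℕ) (s : ℝ) :
    dyadicInterval n s = dyadicIco n ⌊s * 2 ^ n⌋ := rfl

theorem mem_dyadicIco {n : ℕ} {m : ℤ} {x : ℝ} : x ∈ dyadicIco n m ↔ ⌊x * 2 ^ n⌋ = m := by
  have h2 : (0 : ℝ) < 2 ^ n := by positivity
  rw [Int.floor_eq_iff, dyadicIco, mem_Ico, div_le_iff₀ h2, lt_div_iff₀ h2]

theorem mem_dyadicInterval_self (n : ℕ) (s : ℝ) : s ∈ dyadicInterval n s :=
  mem_dyadicIco.2 rfl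

theorem measurableSet_dyadicIco (n : ℕ) (m : ℤ) : MeasurableSet (dyadicIco n m) :=
  measurableSet_Ico

open Function in
theorem pairwise_disjoint_dyadicIco (n : ℕ) : Pairwise (Disjoint on dyadicIco n) :=
  fun _ _ h => disjoint_left.2 fun _ hx hx' =>
    h ((mem_dyadicIco.1 hx).symm.trans (mem_dyadicIco.1 hx'))

theorem measurable_comp_floor_mul_two_pow {β : Type*} [MeasurableSpace β] (n : ℕ) (g : ℤ → β) :
    Measurable fun s : ℝ => g ⌊s * 2 ^ n⌋ :=
  (measurable_of_countable g).comp (Int.measurable_floor.comp (measurable_mul_const _))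

theorem dyadicInterval_subset_Icc (n : ℕ) (s : ℝ) :
    dyadicInterval n s ⊆ Icc (s - (2 ^ n : ℝ)⁻¹) (s + (2 ^ n : ℝ)⁻¹) := by
  intro x hx
  have h2 : (0 : ℝ) < 2 ^ n := by positivity
  have hxm := mem_dyadicIco.1 hx
  have hx1 := Int.floor_le (x * 2 ^ n)
  have hx2 := Int.lt_floor_add_one (x * 2 ^ n)
  have hs1 := Int.floor_le (s * 2 ^ n)
  have hs2 := Int.lt_floor_add_one (s * 2 ^ n)
  rw [hxm] at hx1 hx2
  constructor <;> rw [← mul_le_mul_iff_of_pos_right h2] <;>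
    simp only [sub_mul, add_mul, inv_mul_cancel₀ h2.ne'] <;> linarith

theorem Icc_subset_biUnion_dyadicIco (n : ℕ) (a b : ℝ) :
    Icc a b ⊆ ⋃ m ∈ Finset.Icc ⌊a * 2 ^ n⌋ ⌊b * 2 ^ n⌋, dyadicIco n m := by
  intro s hs
  have h2 : (0 : ℝ) ≤ 2 ^ n := by positivity
  exact mem_biUnion (Finset.mem_Icc.2 ⟨Int.floor_mono (mul_le_mul_of_nonneg_right hs.1 h2),
    Int.floor_mono (mul_le_mul_of_nonneg_right hs.2 h2)⟩) (mem_dyadicIco.2 rfl)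

theorem Icc_sub_add_subset_biUnion_dyadicIco (n : ℕ) (s : ℝ) :
    Icc (s - (2 ^ n : ℝ)⁻¹) (s + (2 ^ n : ℝ)⁻¹) ⊆
      ⋃ j ∈ Finset.Icc (-1 : ℤ) 1, dyadicIco n (⌊s * 2 ^ n⌋ + j) := by
  intro x hx
  have h2 : (0 : ℝ) < 2 ^ n := by positivity
  have hlo : ⌊s * 2 ^ n⌋ - 1 ≤ ⌊x * 2 ^ n⌋ := by
    rw [← Int.floor_sub_one]
    refine Int.floor_mono ?_
    have := mul_le_mul_of_nonneg_right hx.1 h2.le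
    rwa [sub_mul, inv_mul_cancel₀ h2.ne'] at this
  have hhi : ⌊x * 2 ^ n⌋ ≤ ⌊s * 2 ^ n⌋ + 1 := by
    rw [← Int.floor_add_one]
    refine Int.floor_mono ?_
    have := mul_le_mul_of_nonneg_right hx.2 h2.le
    rwa [add_mul, inv_mul_cancel₀ h2.ne'] at this
  refine mem_biUnion (x := ⌊x * 2 ^ n⌋ - ⌊s * 2 ^ n⌋) (Finset.mem_Icc.2 ⟨by omega, by omega⟩) ?_
  rw [mem_dyadicIco]
  ring

theorem dyadicIco_subset_Icc {n : ℕ} {a b : ℝ} {k : ℤ} (ha : ⌊a * 2 ^ n⌋ - 1 ≤ k)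
    (hb : k ≤ ⌊b * 2 ^ n⌋ + 1) : dyadicIco n k ⊆ Icc (a - 2) (b + 2) := by
  intro x hx
  have h1 : (1 : ℝ) ≤ 2 ^ n := one_le_pow₀ (by norm_num)
  have hxk := mem_dyadicIco.1 hx
  have hx1 := Int.floor_le (x * 2 ^ n)
  have hx2 := Int.lt_floor_add_one (x * 2 ^ n)
  have ha' := Int.lt_floor_add_one (a * 2 ^ n)
  have hb' := Int.floor_le (b * 2 ^ n)
  have hak : (⌊a * 2 ^ n⌋ : ℝ) ≤ k + 1 := by exact_mod_cast (by omega : ⌊a * 2 ^ n⌋ ≤ k + 1)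
  have hbk : (k : ℝ) ≤ ⌊b * 2 ^ n⌋ + 1 := by exact_mod_cast hb
  rw [hxk] at hx1 hx2
  constructor <;> nlinarith

theorem card_Icc_floor_mul_two_pow_le (n : ℕ) (a b : ℝ) :
    ((Finset.Icc ⌊a * 2 ^ n⌋ ⌊b * 2 ^ n⌋).card : ℝ) ≤ |b - a| * 2 ^ n + 2 := by
  rw [Int.card_Icc]
  have ha := Int.lt_floor_add_one (a * 2 ^ n)
  have hb := Int.floor_le (b * 2 ^ n)
  rcases le_total (⌊b * 2 ^ n⌋ + 1 - ⌊a * 2 ^ n⌋) 0 with h | h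
  · rw [Int.toNat_of_nonpos h, Nat.cast_zero]
    positivity
  · have hcast : ((⌊b * 2 ^ n⌋ + 1 - ⌊a * 2 ^ n⌋).toNat : ℝ) = ⌊b * 2 ^ n⌋ + 1 - ⌊a * 2 ^ n⌋ := by
      exact_mod_cast Int.toNat_of_nonneg h
    rw [hcast]
    nlinarith [le_abs_self (b - a), pow_pos (two_pos : (0 : ℝ) < 2) n]

theorem setLIntegral_comp_floor_le_sum (ν : Measure ℝ) (n : ℕ) (a b : ℝ) (φ : ℤ → ℝ≥0∞) :
    ∫⁻ s in Icc a b, φ ⌊s * 2 ^ n⌋ ∂ν ≤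
      ∑ m ∈ Finset.Icc ⌊a * 2 ^ n⌋ ⌊b * 2 ^ n⌋, φ m * ν (dyadicIco n m) := by
  calc _ ≤ ∫⁻ s in ⋃ m ∈ Finset.Icc ⌊a * 2 ^ n⌋ ⌊b * 2 ^ n⌋, dyadicIco n m, φ ⌊s * 2 ^ n⌋ ∂ν :=
        lintegral_mono_set (Icc_subset_biUnion_dyadicIco n a b)
    _ = ∑ m ∈ Finset.Icc ⌊a * 2 ^ n⌋ ⌊b * 2 ^ n⌋, ∫⁻ s in dyadicIco n m, φ ⌊s * 2 ^ n⌋ ∂ν :=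
        lintegral_biUnion_finset ((pairwise_disjoint_dyadicIco n).set_pairwise _)
          (fun m _ => measurableSet_dyadicIco n m) _
    _ = _ := Finset.sum_congr rfl fun m _ => by
        rw [setLIntegral_congr_fun (measurableSet_dyadicIco n m)
          (fun s hs => by rw [mem_dyadicIco.1 hs]), setLIntegral_const]

noncomputable def neighbourMass (ν : Measure ℝ) (n : ℕ) (m : ℤ) : ℝ≥0∞ :=
  ∑ j ∈ Finset.Icc (-1 : ℤ) 1, ν (dyadicIco n (m + j))

theorem measure_Icc_sub_add_le_neighbourMass (ν : Measure ℝ) (n : ℕ) (s : ℝ) :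
    ν (Icc (s - (2 ^ n : ℝ)⁻¹) (s + (2 ^ n : ℝ)⁻¹)) ≤ neighbourMass ν n ⌊s * 2 ^ n⌋ :=
  (measure_mono (Icc_sub_add_subset_biUnion_dyadicIco n s)).trans (measure_biUnion_finset_le _ _)

theorem sum_neighbourMass_le (ν : Measure ℝ) (n : ℕ) (a b : ℝ) :
    ∑ m ∈ Finset.Icc ⌊a * 2 ^ n⌋ ⌊b * 2 ^ n⌋, neighbourMass ν n m ≤
      3 * ν (Icc (a - 2) (b + 2)) := by
  have hshift : ∀ j ∈ Finset.Icc (-1 : ℤ) 1,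
      ∑ m ∈ Finset.Icc ⌊a * 2 ^ n⌋ ⌊b * 2 ^ n⌋, ν (dyadicIco n (m + j)) ≤
        ν (Icc (a - 2) (b + 2)) := by
    intro j hj
    have hj := Finset.mem_Icc.1 hj
    rw [← measure_biUnion_finset
      (((pairwise_disjoint_dyadicIco n).comp_of_injective (add_left_injective j)).set_pairwise _)
      (fun _ _ => measurableSet_dyadicIco n _)]
    refine measure_mono (iUnion₂_subset fun m hm => ?_)
    have hm := Finset.mem_Icc.1 hm
    exact dyadicIco_subset_Icc (k := m + j) (by omega) (by omega)
  calc _ = ∑ j ∈ Finset.Icc (-1 : ℤ) 1,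
        ∑ m ∈ Finset.Icc ⌊a * 2 ^ n⌋ ⌊b * 2 ^ n⌋, ν (dyadicIco n (m + j)) := Finset.sum_comm
    _ ≤ ∑ _j ∈ Finset.Icc (-1 : ℤ) 1, ν (Icc (a - 2) (b + 2)) := Finset.sum_le_sum hshift
    _ = 3 * ν (Icc (a - 2) (b + 2)) := by simp

theorem measure_setOf_lt_mul_neighbourMass_inter_Icc_le (ν : Measure ℝ) (n : ℕ) (a b : ℝ)
    (r : ℝ≥0∞) :
    ν ({s | ν (dyadicInterval n s) < r * neighbourMass ν n ⌊s * 2 ^ n⌋} ∩ Icc a b) ≤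
      r * (3 * ν (Icc (a - 2) (b + 2))) := by
  set t := Finset.Icc ⌊a * 2 ^ n⌋ ⌊b * 2 ^ n⌋
  set bad := t.filter fun m => ν (dyadicIco n m) < r * neighbourMass ν n m
  have hcover : {s | ν (dyadicInterval n s) < r * neighbourMass ν n ⌊s * 2 ^ n⌋} ∩ Icc a b ⊆
      ⋃ m ∈ bad, dyadicIco n m := by
    rintro s ⟨hs, hsab⟩
    obtain ⟨m, hm, hsm⟩ := mem_iUnion₂.1 (Icc_subset_biUnion_dyadicIco n a b hsab)
    have hfloor := mem_dyadicIco.1 hsm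
    rw [mem_ofPred_eq, dyadicInterval_eq_dyadicIco, hfloor] at hs
    exact mem_biUnion (Finset.mem_filter.2 ⟨hm, hs⟩) hsm
  calc _ ≤ ∑ m ∈ bad, ν (dyadicIco n m) :=
        (measure_mono hcover).trans (measure_biUnion_finset_le _ _)
    _ ≤ ∑ m ∈ bad, r * neighbourMass ν n m :=
        Finset.sum_le_sum fun m hm => (Finset.mem_filter.1 hm).2.le
    _ ≤ ∑ m ∈ t, r * neighbourMass ν n m := Finset.sum_le_sum_of_subset (Finset.filter_subset _ _)
    _ = r * ∑ m ∈ t, neighbourMass ν n m := (Finset.mul_sum _ _ _).symm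
    _ ≤ r * (3 * ν (Icc (a - 2) (b + 2))) := by gcongr; exact sum_neighbourMass_le ν n a b

theorem ae_mem_Icc_imp_eventually_exp_mul_neighbourMass_le (ν : Measure ℝ)
    [IsLocallyFiniteMeasure ν] (a b : ℝ) {ε : ℝ} (hε : 0 < ε) :
    ∀ᵐ s ∂ν, s ∈ Icc a b → ∀ᶠ n : ℕ in atTop,
      ENNReal.ofReal (exp (-(n * ε))) * neighbourMass ν n ⌊s * 2 ^ n⌋ ≤ ν (dyadicInterval n s) := by
  set q := ENNReal.ofReal (exp (-ε))
  have hq : q < 1 := ENNReal.ofReal_lt_one.2 (exp_lt_one_iff.2 (neg_neg_of_pos hε))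
  have hpow : ∀ n : ℕ, ENNReal.ofReal (exp (-(n * ε))) = q ^ n := fun n => by
    rw [← ENNReal.ofReal_pow (exp_nonneg _), ← exp_nat_mul, mul_neg]
  have hsum : ∑' n : ℕ,
      ν ({s | ν (dyadicInterval n s) < q ^ n * neighbourMass ν n ⌊s * 2 ^ n⌋} ∩ Icc a b) ≠ ∞ := by
    refine ne_top_of_le_ne_top ?_ (ENNReal.tsum_le_tsum fun n =>
      measure_setOf_lt_mul_neighbourMass_inter_Icc_le ν n a b (q ^ n))
    rw [ENNReal.tsum_mul_right, ENNReal.tsum_geometric]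
    exact ENNReal.mul_ne_top (ENNReal.inv_ne_top.2 (tsub_pos_of_lt hq).ne')
      (ENNReal.mul_ne_top (by norm_num) measure_Icc_lt_top.ne)
  filter_upwards [ae_eventually_notMem hsum] with s hs hsab
  filter_upwards [hs] with n hn
  rw [hpow]
  exact not_lt.1 fun h => hn ⟨h, hsab⟩

theorem ae_forall_pos_eventually_exp_mul_measure_Icc_le (ν : Measure ℝ)
    [IsLocallyFiniteMeasure ν] :
    ∀ᵐ s ∂ν, ∀ ε > 0, ∀ᶠ n : ℕ in atTop,
      ENNReal.ofReal (exp (-(n * ε))) * ν (Icc (s - (2 ^ n : ℝ)⁻¹) (s + (2 ^ n : ℝ)⁻¹)) ≤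
        ν (dyadicInterval n s) := by
  have h := ae_all_iff.2 fun k : ℕ => ae_all_iff.2 fun N : ℕ =>
    ae_mem_Icc_imp_eventually_exp_mul_neighbourMass_le ν (-N) N (Nat.one_div_pos_of_nat (n := k))
  filter_upwards [h] with s hs ε hε
  obtain ⟨N, hN⟩ := exists_nat_ge |s|
  obtain ⟨k, hk⟩ := exists_nat_one_div_lt hε
  filter_upwards [hs k N ⟨by linarith [neg_abs_le s], (le_abs_self s).trans hN⟩] with n hn
  refine le_trans ?_ hn
  gcongr ?_ * ?_
  · exact ENNReal.ofReal_le_ofReal (exp_le_exp.2 (neg_le_neg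
      (mul_le_mul_of_nonneg_left hk.le (Nat.cast_nonneg n))))
  · exact measure_Icc_sub_add_le_neighbourMass ν n s

theorem ae_forall_measure_dyadicInterval_ne_zero (ν : Measure ℝ) :
    ∀ᵐ s ∂ν, ∀ n, ν (dyadicInterval n s) ≠ 0 := by
  refine ae_all_iff.2 fun n => ae_iff.2 (measure_mono_null (fun s hs => ?_)
    (measure_iUnion_null fun m => measure_iUnion_null (s := fun (_ : ν (dyadicIco n m) = 0) =>
      dyadicIco n m) id))
  exact mem_iUnion₂.2 ⟨_, not_not.1 hs, mem_dyadicInterval_self n s⟩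

noncomputable def dyadicLogRate (ν : Measure ℝ) (n : ℕ) (s : ℝ) : ℝ :=
  -(1 / (n : ℝ)) * log (ν (dyadicInterval n s)).toReal

theorem measurable_dyadicLogRate (ν : Measure ℝ) (n : ℕ) : Measurable (dyadicLogRate ν n) :=
  measurable_comp_floor_mul_two_pow n fun m => -(1 / (n : ℝ)) * log (ν (dyadicIco n m)).toReal

theorem ae_tendsto_dyadicLogRate (ν : Measure ℝ) [IsLocallyFiniteMeasure ν] {Δ : ℝ}
    (hdim : ∀ᵐ s ∂ν, Tendsto (fun t : ℝ => (1 / t) *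
      log (ν (Icc (s - exp (-t)) (s + exp (-t)))).toReal) atTop (𝓝 (-Δ))) :
    ∀ᵐ s ∂ν, Tendsto (fun n => dyadicLogRate ν n s) atTop (𝓝 (Δ * log 2)) := by
  filter_upwards [hdim, ae_forall_pos_eventually_exp_mul_measure_Icc_le ν,
    ae_forall_measure_dyadicInterval_ne_zero ν] with s hs hcomp hpos
  have hexp : ∀ n : ℕ, exp (-(n * log 2)) = (2 ^ n : ℝ)⁻¹ := fun n => by
    rw [exp_neg, exp_nat_mul, exp_log two_pos]
  refine tendsto_neg_inv_mul_log_of_exp_neg_mul_le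
    (y := fun n => (ν (Icc (s - (2 ^ n : ℝ)⁻¹) (s + (2 ^ n : ℝ)⁻¹))).toReal)
    (fun n => ENNReal.toReal_pos (hpos n) measure_Ico_lt_top.ne)
    (fun n => ENNReal.toReal_mono measure_Icc_lt_top.ne
      (measure_mono (dyadicInterval_subset_Icc n s)))
    (fun ε hε => (hcomp ε hε).mono fun n hn => ?_) ?_
  · have := ENNReal.toReal_mono measure_Ico_lt_top.ne hn
    rwa [ENNReal.toReal_mul, ENNReal.toReal_ofReal (exp_nonneg _)] at this
  · simpa only [hexp] using tendsto_neg_inv_mul_comp_mul_log_two hs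

theorem neg_abs_log_le_dyadicLogRate (ν : Measure ℝ) [IsLocallyFiniteMeasure ν] (n : ℕ)
    {a b s : ℝ} (hs : s ∈ Icc a b) :
    -|log (ν (Icc (a - 1) (b + 1))).toReal| ≤ dyadicLogRate ν n s := by
  have hr : (2 ^ n : ℝ)⁻¹ ≤ 1 := inv_le_one_of_one_le₀ (one_le_pow₀ one_le_two)
  have hsub : dyadicInterval n s ⊆ Icc (a - 1) (b + 1) := (dyadicInterval_subset_Icc n s).trans
    (Icc_subset_Icc (by linarith [hs.1]) (by linarith [hs.2]))
  exact neg_abs_log_le_neg_inv_mul_log ENNReal.toReal_nonneg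
    (ENNReal.toReal_mono measure_Icc_lt_top.ne (measure_mono hsub)) n

theorem setLIntegral_ofReal_dyadicLogRate_sub_one_le (ν : Measure ℝ) [IsLocallyFiniteMeasure ν]
    {n : ℕ} (hn : 1 ≤ n) (a b : ℝ) :
    ∫⁻ s in Icc a b, ENNReal.ofReal (dyadicLogRate ν n s - 1) ∂ν ≤
      ENNReal.ofReal ((|b - a| * 2 ^ n + 2) * exp (-n)) := by
  set t := Finset.Icc ⌊a * 2 ^ n⌋ ⌊b * 2 ^ n⌋
  calc _ ≤ ∑ m ∈ t, ENNReal.ofReal (-(1 / (n : ℝ)) * log (ν (dyadicIco n m)).toReal - 1) *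
        ν (dyadicIco n m) := setLIntegral_comp_floor_le_sum ν n a b
          fun m => ENNReal.ofReal (-(1 / (n : ℝ)) * log (ν (dyadicIco n m)).toReal - 1)
    _ ≤ ∑ _m ∈ t, ENNReal.ofReal (exp (-n)) := Finset.sum_le_sum fun m _ => by
        calc _ = ENNReal.ofReal ((-(1 / (n : ℝ)) * log (ν (dyadicIco n m)).toReal - 1) *
              (ν (dyadicIco n m)).toReal) := by
              rw [ENNReal.ofReal_mul' ENNReal.toReal_nonneg,
                ENNReal.ofReal_toReal (show ν (dyadicIco n m) ≠ ∞ from measure_Ico_lt_top.ne)]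
          _ ≤ _ := ENNReal.ofReal_le_ofReal
              (neg_inv_mul_log_sub_one_mul_le ENNReal.toReal_nonneg hn)
    _ = ENNReal.ofReal (t.card * exp (-n)) := by
        rw [Finset.sum_const, nsmul_eq_mul, ENNReal.ofReal_mul (Nat.cast_nonneg _),
          ENNReal.ofReal_natCast]
    _ ≤ _ := ENNReal.ofReal_le_ofReal
        (mul_le_mul_of_nonneg_right (card_Icc_floor_mul_two_pow_le n a b) (exp_pos _).le)

theorem tendsto_setLIntegral_ofReal_dyadicLogRate_sub_one (ν : Measure ℝ)
    [IsLocallyFiniteMeasure ν] (a b : ℝ) :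
    Tendsto (fun n => ∫⁻ s in Icc a b, ENNReal.ofReal (dyadicLogRate ν n s - 1) ∂ν) atTop (𝓝 0) :=
  tendsto_of_tendsto_of_tendsto_of_le_of_le' tendsto_const_nhds
    (ENNReal.ofReal_zero ▸ ENNReal.tendsto_ofReal (tendsto_mul_two_pow_add_mul_exp_neg |b - a| 2))
    (Eventually.of_forall fun _ => zero_le)
    ((eventually_ge_atTop 1).mono fun _ hn => setLIntegral_ofReal_dyadicLogRate_sub_one_le ν hn a b)

/-- **Claim 3.13 (pure dimension implies local L¹ convergence).**
Let `ν` be a locally finite measure on `ℝ` such that for `ν`-a.e. `s`,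
`(1/t)·log ν [s − e^{−t}, s + e^{−t}] → −Δ` as `t → ∞`.  Set
`uₙ s = −(1/n)·log ν (τ̃ₙ s)`, where `τ̃ₙ s` is the level-`n` dyadic interval containing `s`.
Then `uₙ → Δ·log 2` locally in `L¹(ν)`: for every bounded interval `[a,b]`,
`∫_{[a,b]} |uₙ − Δ·log 2| dν → 0`. -/
theorem pure_dimension_implies_L1_convergence
    (ν : Measure ℝ) [IsLocallyFiniteMeasure ν] (Δ : ℝ)
    (hdim : ∀ᵐ s ∂ν, Tendsto
      (fun t : ℝ => (1 / t) *
        Real.log ((ν (Set.Icc (s - Real.exp (-t)) (s + Real.exp (-t)))).toReal))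
      atTop (nhds (-Δ))) :
    ∀ a b : ℝ, Tendsto
      (fun n : ℕ => ∫ s in Set.Icc a b,
        |(-(1 / (n : ℝ)) * Real.log ((ν (dyadicInterval n s)).toReal)) - Δ * Real.log 2| ∂ν)
      atTop (nhds 0) := by
  intro a b
  have : IsFiniteMeasure (ν.restrict (Icc a b)) := isFiniteMeasure_restrict.2 measure_Icc_lt_top.ne
  set K := |log (ν (Icc (a - 1) (b + 1))).toReal|
  refine tendsto_integral_of_ae_tendsto_zero_of_tendsto_lintegral_sub (K + |Δ * log 2| + 1)
    (fun n => ((measurable_dyadicLogRate ν n).sub_const _).abs) (fun _ _ => abs_nonneg _) ?_ ?_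
  · refine ae_restrict_of_ae ((ae_tendsto_dyadicLogRate ν hdim).mono fun s hs => ?_)
    have h_abs := (hs.sub_const (Δ * log 2)).abs
    rwa [sub_self, abs_zero] at h_abs
  · refine tendsto_of_tendsto_of_tendsto_of_le_of_le tendsto_const_nhds
      (tendsto_setLIntegral_ofReal_dyadicLogRate_sub_one ν a b) (fun _ => zero_le)
      fun n => setLIntegral_mono' measurableSet_Icc fun s hs => ?_
    exact ofReal_abs_sub_sub_le_ofReal_sub_one (neg_abs_log_le_dyadicLogRate ν n hs) (abs_nonneg _)
end

section
/- Let X be a locally compact second-countable metrizable space carrying two jointly continuous flows (a_t)_{t∈ℝ} and (u_s)_{s∈ℝ} by homeomorphisms satisfying the commutation relation a_t ∘ u_s = u_{e^t·s} ∘ a_t for all t, s ∈ ℝ. Let μ be a Borel probability measure on X with (a_t)_*μ = μ for all t ∈ ℝ. Define the probability measure ν = ∫₀¹ (u_{−s})_*μ ds, i.e. ν(E) = ∫₀¹ μ({x : u_{−s}(x) ∈ E}) ds for Borel E. If ν = (1/2)·(a_{log 2})_*ν + (1/2)·(u_1 ∘ a_{log 2})_*ν, then μ is invariant under the whole flow u: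 (u_s)_*μ = μ for all s ∈ ℝ. -/
/-!
To a bounded continuous `φ` attach its profile `f r = ∫ φ ∘ u (-r) dμ`, a bounded continuous
function of `r`. The commutation relation and the `a`-invariance of `μ` turn translations and
dilations of `r` into changes of `φ`, and the stationarity of `ν` says that every profile satisfies
`∫₀¹ f = ½ ∫₀¹ f (2x) + ½ ∫₀¹ f (2x - 1)`. Applied to translates of `f`, this makes the unit
window averages `c ↦ ∫_c^{c+1} f` a bounded discrete harmonic function, hence 1-periodic; applied
to dilates, any two adjacent windows of equal length carry the same integral, so the primitive of
`f` is affine and `f` is constant. Hence `∫ φ d(u s)_*μ = ∫ φ dμ` for every `φ`, and bounded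
continuous functions determine finite Borel measures on a metrizable space.
-/

open MeasureTheory BoundedContinuousFunction

theorem periodic_of_bounded_of_discrete_harmonic {g : ℝ → ℝ} {C : ℝ} (hC : ∀ x, |g x| ≤ C)
    (hg : ∀ x, g (x + 1) + g (x - 1) = 2 * g x) : Function.Periodic g 1 := by
  set d : ℝ → ℝ := fun x => g (x + 1) - g x with hd_def
  have hd : Function.Periodic d 1 := fun x => by
    have := hg (x + 1)
    simp only [hd_def, add_sub_cancel_right] at this ⊢
    linarith
  -- The increments `d` are 1-periodic, so `g` grows linearly along `x + ℕ` unless `d x = 0`.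
  have hgrowth : ∀ (n : ℕ) x, g (x + n) = g x + n * d x := by
    intro n x
    induction n with
    | zero => simp
    | succ n ih =>
      have hdn : d (x + n) = d x := by simpa using hd.nat_mul n x
      simp only [hd_def] at hdn
      push_cast
      rw [← add_assoc]
      linarith
  intro x
  by_contra hne
  have hdx : 0 < |d x| := abs_pos.mpr (sub_ne_zero.mpr hne)
  obtain ⟨n, hn⟩ := exists_nat_gt (2 * C / |d x|)
  have hbound : n * |d x| ≤ 2 * C := by
    calc n * |d x| = |g (x + n) - g x| := by
          rw [hgrowth, add_sub_cancel_left, abs_mul, Nat.abs_cast]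
      _ ≤ |g (x + n)| + |g x| := abs_sub _ _
      _ ≤ 2 * C := by linarith [hC (x + n), hC x]
  rw [div_lt_iff₀ hdx] at hn
  linarith

theorem apply_eq_apply_zero_of_integral_consecutive_eq {f : ℝ → ℝ} (hf : Continuous f)
    (h : ∀ x, ∀ l > 0, ∫ t in x..x + l, f t = ∫ t in x + l..x + 2 * l, f t) (x : ℝ) :
    f x = f 0 := by
  set H : ℝ → ℝ := fun y => ∫ t in 0..y, f t
  have hH : ∀ y, HasDerivAt H (f y) y := fun y => (hf.integral_hasStrictDerivAt 0 y).hasDerivAt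
  have hsub : ∀ y z, ∫ t in y..z, f t = H z - H y := fun y z =>
    (intervalIntegral.integral_interval_sub_left (hf.intervalIntegrable _ _)
      (hf.intervalIntegrable _ _)).symm
  have hmid_of_lt : ∀ y z, y < z → H (midpoint ℝ y z) = midpoint ℝ (H y) (H z) := by
    intro y z hyz
    have hyz' := h y ((z - y) / 2) (by linarith)
    rw [hsub, hsub, show y + 2 * ((z - y) / 2) = z by ring] at hyz'
    rw [midpoint_eq_smul_add, midpoint_eq_smul_add, show (⅟2 : ℝ) • (y + z) = y + (z - y) / 2 by
      simp only [smul_eq_mul, invOf_eq_inv]; ring]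
    simp only [smul_eq_mul, invOf_eq_inv]
    linarith
  have hmid : ∀ y z, H (midpoint ℝ y z) = midpoint ℝ (H y) (H z) := by
    intro y z
    rcases lt_trichotomy y z with hyz | rfl | hyz
    · exact hmid_of_lt y z hyz
    · simp
    · rw [midpoint_comm, hmid_of_lt z y hyz, midpoint_comm]
  -- `H` maps midpoints to midpoints, so it is affine, and its derivative `f` is constant.
  set A := AffineMap.ofMapMidpoint H hmid
    (continuous_iff_continuousAt.2 fun y => (hH y).continuousAt)
  have hA : H = fun y => y * A.linear 1 + H 0 := funext fun y => by
    have h1 : A.linear y = A y - A 0 := by simpa using A.linearMap_vsub y 0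
    change A.linear y = H y - H 0 at h1
    have h2 : A.linear y = y * A.linear 1 := by simpa using A.linear.map_smul y 1
    linarith
  have hderiv : ∀ y, f y = A.linear 1 := fun y => by
    refine (hH y).unique ?_
    rw [hA]
    simpa using ((hasDerivAt_id y).mul_const (A.linear 1)).add_const (H 0)
  rw [hderiv, hderiv]

def IsDyadicStationary (g : ℝ → ℝ) : Prop :=
  ∫ x in 0..1, g x = 2⁻¹ * (∫ x in 0..1, g (2 * x)) + 2⁻¹ * ∫ x in 0..1, g (2 * x - 1)

theorem IsDyadicStationary.integral_add_integral_eq_two_mul {g : ℝ → ℝ} (hg : Continuous g)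
    (hs : IsDyadicStationary g) :
    (∫ x in (1 : ℝ)..2, g x) + ∫ x in (-1 : ℝ)..0, g x = 2 * ∫ x in (0 : ℝ)..1, g x := by
  unfold IsDyadicStationary at hs
  rw [intervalIntegral.integral_comp_mul_left g (by norm_num : (2 : ℝ) ≠ 0),
    intervalIntegral.integral_comp_mul_sub g (by norm_num : (2 : ℝ) ≠ 0)] at hs
  norm_num at hs
  have h02 := intervalIntegral.integral_add_adjacent_intervals
    (hg.intervalIntegrable (μ := volume) 0 1) (hg.intervalIntegrable 1 2)
  have hm11 := intervalIntegral.integral_add_adjacent_intervals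
    (hg.intervalIntegrable (μ := volume) (-1) 0) (hg.intervalIntegrable 0 1)
  linarith

theorem periodic_unitIntegral_of_isDyadicStationary {g : ℝ → ℝ} {C : ℝ} (hg : Continuous g)
    (hC : ∀ x, |g x| ≤ C) (hs : ∀ c, IsDyadicStationary fun x => g (x + c)) :
    Function.Periodic (fun c => ∫ x in c..c + 1, g x) 1 := by
  refine periodic_of_bounded_of_discrete_harmonic (C := C) (fun c => ?_) fun c => ?_
  · simpa using intervalIntegral.norm_integral_le_of_norm_le_const (a := c) (b := c + 1)
      fun x _ => (Real.norm_eq_abs _).trans_le (hC x)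
  · have := (hs c).integral_add_integral_eq_two_mul (by fun_prop)
    simp only [intervalIntegral.integral_comp_add_right] at this
    convert this using 3 <;> ring

theorem apply_eq_apply_zero_of_isDyadicStationary {f : ℝ → ℝ} {C : ℝ} (hf : Continuous f)
    (hC : ∀ x, |f x| ≤ C) (hs : ∀ l > 0, ∀ c, IsDyadicStationary fun x => f (l * x + c))
    (x : ℝ) : f x = f 0 := by
  refine apply_eq_apply_zero_of_integral_consecutive_eq hf (fun y l hl => ?_) x
  have := periodic_unitIntegral_of_isDyadicStationary (g := fun x => f (l * x))
    (by fun_prop) (fun _ => hC _)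
    (fun c => by simpa only [mul_add] using hs l hl (l * c)) (y / l)
  simp only [intervalIntegral.integral_comp_mul_left _ hl.ne', smul_eq_mul] at this
  rw [mul_right_inj' (inv_ne_zero hl.ne')] at this
  convert this.symm using 2 <;> field_simp; ring

noncomputable def flowProfile {X : Type*} [MeasurableSpace X] (u : ℝ → X → X) (μ : Measure X)
    (φ : X → ℝ) (r : ℝ) : ℝ :=
  ∫ x, φ (u (-r) x) ∂μ

section FlowProfile

variable {X : Type*} [MeasurableSpace X] {u : ℝ → X → X}

theorem flowProfile_comp_flow (hu_add : ∀ s s' x, u (s + s') x = u s (u s' x))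
    (μ : Measure X) (φ : X → ℝ) (t r : ℝ) :
    flowProfile u μ (φ ∘ u t) r = flowProfile u μ φ (r - t) := by
  simp only [flowProfile, Function.comp_apply, ← hu_add]
  congr with x
  ring_nf

theorem flowProfile_comp_of_semiconj (hu : ∀ s, Measurable (u s)) {μ : Measure X} {g : X → X}
    {c : ℝ} (hg : Measurable g) (hgμ : Measure.map g μ = μ)
    (hgu : ∀ s x, g (u s x) = u (c * s) (g x)) {φ : X → ℝ} (hφ : Measurable φ) (r : ℝ) :
    flowProfile u μ (φ ∘ g) r = flowProfile u μ φ (c * r) := by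
  have := integral_map (μ := μ) hg.aemeasurable (hφ.comp (hu (-(c * r)))).aestronglyMeasurable
  simp only [flowProfile, Function.comp_apply, hgu, hgμ, mul_neg] at this ⊢
  exact this.symm

theorem eq_map_prod_of_eq_lintegral {μ ν : Measure X} [SFinite μ] {ρ : Measure ℝ} [SFinite ρ]
    (hu : Measurable fun p : ℝ × X => u (-p.1) p.2)
    (hν : ∀ E, MeasurableSet E → ν E = ∫⁻ s, μ ((fun x => u (-s) x) ⁻¹' E) ∂ρ) :
    ν = Measure.map (fun p : ℝ × X => u (-p.1) p.2) (ρ.prod μ) := by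
  ext E hE
  rw [Measure.map_apply hu hE, Measure.prod_apply (hu hE), hν E hE]
  rfl

variable [TopologicalSpace X]

theorem abs_flowProfile_le (u : ℝ → X → X) (μ : Measure X) [IsFiniteMeasure μ] (φ : X →ᵇ ℝ)
    (r : ℝ) : |flowProfile u μ φ r| ≤ ‖φ‖ * μ.real Set.univ :=
  norm_integral_le_of_norm_le_const (.of_forall fun _ => φ.norm_coe_le_norm _)

variable [BorelSpace X]

theorem continuous_flowProfile (hu : Continuous fun p : ℝ × X => u p.1 p.2)
    (μ : Measure X) [IsFiniteMeasure μ] (φ : X →ᵇ ℝ) : Continuous (flowProfile u μ φ) :=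
  continuous_of_dominated (bound := fun _ => ‖φ‖)
    (fun r => (φ.continuous.comp (hu.uncurry_left _)).aestronglyMeasurable)
    (fun _ => .of_forall fun _ => φ.norm_coe_le_norm _) (integrable_const _)
    (.of_forall fun _ => by fun_prop)

theorem integral_eq_integral_flowProfile [SecondCountableTopology X] {μ ν : Measure X}
    [IsFiniteMeasure μ] {ρ : Measure ℝ} [IsFiniteMeasure ρ]
    (hu : Continuous fun p : ℝ × X => u p.1 p.2)
    (hν : ∀ E, MeasurableSet E → ν E = ∫⁻ s, μ ((fun x => u (-s) x) ⁻¹' E) ∂ρ) (φ : X →ᵇ ℝ) :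
    ∫ x, φ x ∂ν = ∫ s, flowProfile u μ φ s ∂ρ := by
  have hcont : Continuous fun p : ℝ × X => u (-p.1) p.2 :=
    hu.comp (continuous_fst.neg.prodMk continuous_snd)
  rw [eq_map_prod_of_eq_lintegral hcont.measurable hν, integral_map hcont.aemeasurable
    φ.continuous.aestronglyMeasurable,
    integral_prod (fun p : ℝ × X => φ (u (-p.1) p.2)) ((φ.compContinuous ⟨_, hcont⟩).integrable _)]
  rfl

theorem isDyadicStationary_flowProfile [SecondCountableTopology X]
    (hu : Continuous fun p : ℝ × X => u p.1 p.2) (hu_add : ∀ s s' x, u (s + s') x = u s (u s' x))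
    {g : X → X} (hg : Continuous g) (hgu : ∀ s x, g (u s x) = u (2 * s) (g x))
    {μ : Measure X} [IsFiniteMeasure μ] (hgμ : Measure.map g μ = μ) {ν : Measure X}
    (hν : ∀ E, MeasurableSet E →
      ν E = ∫⁻ s in Set.Icc (0 : ℝ) 1, μ ((fun x => u (-s) x) ⁻¹' E))
    (hstat : ν = (2⁻¹ : ENNReal) • Measure.map g ν
        + (2⁻¹ : ENNReal) • Measure.map (fun x => u 1 (g x)) ν)
    (φ : X →ᵇ ℝ) : IsDyadicStationary (flowProfile u μ φ) := by
  have hu' : ∀ s, Measurable (u s) := fun s => (hu.uncurry_left s).measurable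
  have hint : ∀ ψ : X →ᵇ ℝ, ∫ x, ψ x ∂ν = ∫ s in 0..1, flowProfile u μ ψ s := fun ψ => by
    rw [integral_eq_integral_flowProfile hu hν, intervalIntegral.integral_of_le zero_le_one,
      integral_Icc_eq_integral_Ioc]
  have hνfin : IsFiniteMeasure ν := ⟨by simp [hν _ MeasurableSet.univ]⟩
  have h := congrArg (fun m => ∫ x, φ x ∂m) hstat
  rw [integral_add_measure ((φ.integrable _).smul_measure (by simp))
      ((φ.integrable _).smul_measure (by simp)), integral_smul_measure,
    integral_smul_measure, integral_map hg.aemeasurable φ.continuous.aestronglyMeasurable,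
    integral_map (by fun_prop) φ.continuous.aestronglyMeasurable] at h
  have h1 := hint (φ.compContinuous ⟨g, hg⟩)
  have h2 := hint ((φ.compContinuous ⟨u 1, hu.uncurry_left 1⟩).compContinuous ⟨g, hg⟩)
  simp only [coe_compContinuous, ContinuousMap.coe_mk] at h1 h2
  simp only [flowProfile_comp_of_semiconj hu' hg.measurable hgμ hgu φ.continuous.measurable] at h1
  simp only [flowProfile_comp_of_semiconj hu' hg.measurable hgμ hgu
    (φ.continuous.measurable.comp (hu' 1)), flowProfile_comp_flow hu_add] at h2
  unfold IsDyadicStationary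
  rw [← hint φ, h, ← h1, ← h2]
  norm_num

end FlowProfile

theorem stationarity_implies_unipotent_invariance_general
    {X : Type*} [TopologicalSpace X] [SecondCountableTopology X]
    [TopologicalSpace.MetrizableSpace X] [MeasurableSpace X] [BorelSpace X]
    (a u : ℝ → X → X)
    (ha_cont : Continuous fun p : ℝ × X => a p.1 p.2)
    (hu_cont : Continuous fun p : ℝ × X => u p.1 p.2)
    (hu_zero : ∀ x, u 0 x = x) (hu_add : ∀ s s' x, u (s + s') x = u s (u s' x))
    (hcomm : ∀ t s x, a t (u s x) = u (Real.exp t * s) (a t x))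
    (μ : Measure X) [IsProbabilityMeasure μ]
    (hμa : ∀ t : ℝ, Measure.map (a t) μ = μ)
    (ν : Measure X)
    (hν : ∀ E : Set X, MeasurableSet E →
      ν E = ∫⁻ s in Set.Icc (0 : ℝ) 1, μ ((fun x => u (-s) x) ⁻¹' E))
    (hstat : ν = (2⁻¹ : ENNReal) • Measure.map (a (Real.log 2)) ν
        + (2⁻¹ : ENNReal) • Measure.map (fun x => u 1 (a (Real.log 2) x)) ν) :
    ∀ s : ℝ, Measure.map (u s) μ = μ := by
  have hu : ∀ s, Continuous (u s) := fun s => hu_cont.uncurry_left s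
  have ha : ∀ t, Continuous (a t) := fun t => ha_cont.uncurry_left t
  have hstationary (φ : X →ᵇ ℝ) : IsDyadicStationary (flowProfile u μ φ) :=
    isDyadicStationary_flowProfile hu_cont hu_add (ha _)
      (by simpa [Real.exp_log] using hcomm (Real.log 2)) (hμa _) hν hstat φ
  have hconst (φ : X →ᵇ ℝ) (r : ℝ) : flowProfile u μ φ r = flowProfile u μ φ 0 := by
    refine apply_eq_apply_zero_of_isDyadicStationary (continuous_flowProfile hu_cont μ φ)
      (abs_flowProfile_le u μ φ) (fun l hl c => ?_) r
    -- `φ ∘ u (-c) ∘ a (log l)` has profile `r ↦ flowProfile u μ φ (l * r + c)`.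
    convert hstationary ((φ.compContinuous ⟨u (-c), hu _⟩).compContinuous ⟨a (Real.log l), ha _⟩)
      using 1
    ext x
    rw [coe_compContinuous, ContinuousMap.coe_mk, coe_compContinuous, ContinuousMap.coe_mk,
      flowProfile_comp_of_semiconj (fun s => (hu s).measurable) (ha _).measurable (hμa _)
        (hcomm _) (φ.continuous.comp (hu _)).measurable,
      flowProfile_comp_flow hu_add, Real.exp_log hl, sub_neg_eq_add]
  intro s
  refine ext_of_forall_integral_eq_of_IsFiniteMeasure fun φ => ?_
  rw [integral_map (hu s).aemeasurable φ.continuous.aestronglyMeasurable]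
  simpa [flowProfile, hu_zero] using hconst φ (-s)

/-- **(Key step in Theorem 3.8.)**
Let `X` be a locally compact second-countable metrizable space carrying jointly continuous
flows `a` and `u` satisfying `a t ∘ u s = u (eᵗ·s) ∘ a t`.  Let `μ` be an `a`-invariant Borel
probability measure, and let `ν = ∫₀¹ (u (−s))_* μ ds`.  If
`ν = ½·(a (log 2))_* ν + ½·(u 1 ∘ a (log 2))_* ν`, then `μ` is `u`-invariant. -/
theorem stationarity_implies_unipotent_invariance
    {X : Type*} [TopologicalSpace X] [LocallyCompactSpace X] [SecondCountableTopology X]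
    [TopologicalSpace.MetrizableSpace X] [MeasurableSpace X] [BorelSpace X]
    (a u : ℝ → X → X)
    (ha_cont : Continuous fun p : ℝ × X => a p.1 p.2)
    (hu_cont : Continuous fun p : ℝ × X => u p.1 p.2)
    (ha_zero : ∀ x, a 0 x = x) (ha_add : ∀ t t' x, a (t + t') x = a t (a t' x))
    (hu_zero : ∀ x, u 0 x = x) (hu_add : ∀ s s' x, u (s + s') x = u s (u s' x))
    (hcomm : ∀ t s x, a t (u s x) = u (Real.exp t * s) (a t x))
    (μ : Measure X) [IsProbabilityMeasure μ]
    (hμa : ∀ t : ℝ, Measure.map (a t) μ = μ)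
    (ν : Measure X)
    (hν : ∀ E : Set X, MeasurableSet E →
      ν E = ∫⁻ s in Set.Icc (0 : ℝ) 1, μ ((fun x => u (-s) x) ⁻¹' E))
    (hstat : ν = (2⁻¹ : ENNReal) • Measure.map (a (Real.log 2)) ν
        + (2⁻¹ : ENNReal) • Measure.map (fun x => u 1 (a (Real.log 2) x)) ν) :
    ∀ s : ℝ, Measure.map (u s) μ = μ :=
  stationarity_implies_unipotent_invariance_general a u ha_cont hu_cont hu_zero hu_add hcomm μ hμa ν
    hν hstat
end

section
/- Let (X, μ) be a probability space with a Markov kernel x ↦ ν_x for which μ is stationary. Let 0 < T₀ < T₁ with T₀ > T₁/2, and ε > 0. Suppose α : X → [0, ∞) is an (ε; T₀, T₁)-additive Margulis function, and β : X → [0, ∞) is measurable, satisfies condition (M-a) with constant T₁ (for μ-a.e. x and ν_x-a.e. y, |β(y) − β(x)| ≤ T₁), and satisfies μ({x ∈ X : α(x) + T₁ ≤ β(x) < T₀ + ∫_X β(y) dν_x(y)}) < ε. Then γ := max(0, α − 2T₁, β − 5T₁) is a (2ε; 2T₀ − T₁, T₁)-additive Margulis function: γ satisfies (M-a) with constant T₁,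 and μ({x ∈ X : T₁ ≤ γ(x) < (2T₀ − T₁) + ∫_X γ(y) dν_x(y)}) < 2ε. -/
/-! Write `γ = max(0, α − 2T₁, β − 5T₁)` and fix `x` with `γ x ≥ T₁` outside the two exceptional
sets. If `β x < α x + T₁`, then `γ x = α x − 2T₁ ≥ T₁` and `γ = α − 2T₁` on the support of `ν_x`,
so `γ` inherits the drift `T₀` of `α`. If `β x ≥ α x + T₁` and `α x < T₁`, likewise
`γ = β − 5T₁` there and `γ` inherits the drift of `β`. Otherwise both `α` and `β` drift by `T₀`
at `x`, and since `γ x ≥ T₁`, a step of `ν_x` raises `γ` by at most the sum of the increments of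
`α` and `β` plus `T₁`, which gives the drift `2T₀ − T₁`. The exceptional sets have measure `< ε`
each. -/

open MeasureTheory ProbabilityTheory

def maxCombine (T a b : ℝ) : ℝ := max 0 (max (a - 2 * T) (b - 5 * T))

section MaxCombine

variable {T a b a' b' : ℝ}

lemma abs_maxCombine_sub_le (ha : |a' - a| ≤ T) (hb : |b' - b| ≤ T) :
    |maxCombine T a' b' - maxCombine T a b| ≤ T := by
  calc |maxCombine T a' b' - maxCombine T a b|
      ≤ max |(0 : ℝ) - 0| |max (a' - 2 * T) (b' - 5 * T) - max (a - 2 * T) (b - 5 * T)| :=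
        abs_max_sub_max_le_max _ _ _ _
    _ ≤ max |(0 : ℝ) - 0| (max |a' - 2 * T - (a - 2 * T)| |b' - 5 * T - (b - 5 * T)|) := by
        gcongr
        exact abs_max_sub_max_le_max _ _ _ _
    _ ≤ T := by
        simpa [(abs_nonneg _).trans ha] using And.intro ha hb

lemma le_maxCombine_of_le_left (h : a' ≤ a - 2 * T) : a' ≤ maxCombine T a b :=
  h.trans ((le_max_left _ _).trans (le_max_right _ _))

lemma le_maxCombine_of_le_right (h : b' ≤ b - 5 * T) : b' ≤ maxCombine T a b :=
  h.trans ((le_max_right _ _).trans (le_max_right _ _))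

lemma three_mul_le_of_le_maxCombine (hT : 0 < T) (hba : b < a + T) (h : T ≤ maxCombine T a b) :
    3 * T ≤ a := by
  by_contra! ha
  exact h.not_gt (max_lt hT (max_lt (by linarith) (by linarith)))

lemma six_mul_le_of_le_maxCombine (hT : 0 < T) (ha : a < T) (h : T ≤ maxCombine T a b) :
    6 * T ≤ b := by
  by_contra! hb
  exact h.not_gt (max_lt hT (max_lt (by linarith) (by linarith)))

lemma maxCombine_le_of_three_mul_le (ha' : |a' - a| ≤ T) (hb' : |b' - b| ≤ T) (hba : b < a + T)
    (ha : 3 * T ≤ a) : maxCombine T a' b' ≤ a' - 2 * T := by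
  obtain ⟨ha₁, -⟩ := abs_le.mp ha'
  obtain ⟨-, hb₂⟩ := abs_le.mp hb'
  exact max_le (by linarith) (max_le le_rfl (by linarith))

lemma maxCombine_le_of_six_mul_le (ha' : |a' - a| ≤ T) (hb' : |b' - b| ≤ T) (ha : a < T)
    (hb : 6 * T ≤ b) : maxCombine T a' b' ≤ b' - 5 * T := by
  obtain ⟨-, ha₂⟩ := abs_le.mp ha'
  obtain ⟨hb₁, -⟩ := abs_le.mp hb'
  exact max_le (by linarith) (max_le (by linarith) le_rfl)

/-- Once `T ≤ maxCombine T a b`, the slack `T` absorbs whichever increment is negative. -/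
lemma maxCombine_le_add_of_le (ha' : |a' - a| ≤ T) (hb' : |b' - b| ≤ T)
    (h : T ≤ maxCombine T a b) :
    maxCombine T a' b' ≤ maxCombine T a b + T + (a' - a) + (b' - b) := by
  obtain ⟨ha₁, -⟩ := abs_le.mp ha'
  obtain ⟨hb₁, -⟩ := abs_le.mp hb'
  have hleft : a - 2 * T ≤ maxCombine T a b := le_maxCombine_of_le_left le_rfl
  have hright : b - 5 * T ≤ maxCombine T a b := le_maxCombine_of_le_right le_rfl
  exact max_le (by linarith) (max_le (by linarith) (by linarith))

end MaxCombine

section Integral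

variable {X : Type*} [MeasurableSpace X] {ν : Measure X}

lemma integrable_of_ae_abs_sub_le [IsFiniteMeasure ν] {f : X → ℝ} {c T : ℝ}
    (hf : AEStronglyMeasurable f ν) (h : ∀ᵐ y ∂ν, |f y - c| ≤ T) : Integrable f ν :=
  Integrable.of_bound hf (|c| + T) <| h.mono fun y hy => by
    rw [Real.norm_eq_abs]
    linarith [abs_sub_abs_le_abs_sub (f y) c]

lemma integral_le_of_ae_le_add_const [IsProbabilityMeasure ν] {f g : X → ℝ} {c : ℝ}
    (hf : Integrable f ν) (hg : Integrable g ν) (h : ∀ᵐ y ∂ν, f y ≤ g y + c) :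
    ∫ y, f y ∂ν ≤ ∫ y, g y ∂ν + c := by
  calc ∫ y, f y ∂ν ≤ ∫ y, (g y + c) ∂ν := integral_mono_ae hf (hg.add (integrable_const c)) h
    _ = ∫ y, g y ∂ν + c := by
        rw [integral_add hg (integrable_const c), integral_const, probReal_univ, one_smul]

/-- `ν` plays the role of `ν_x` at a point `x` with `α x = a`, `β x = b`. -/
theorem maxCombine_drift [IsProbabilityMeasure ν] {f g : X → ℝ} {a b T₀ T : ℝ}
    (hf : Measurable f) (hg : Measurable g) (hT : 0 < T) (hT₀T : T₀ ≤ T)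
    (hfa : ∀ᵐ y ∂ν, |f y - a| ≤ T) (hgb : ∀ᵐ y ∂ν, |g y - b| ≤ T)
    (hfd : T ≤ a → T₀ + ∫ y, f y ∂ν ≤ a) (hgd : a + T ≤ b → T₀ + ∫ y, g y ∂ν ≤ b)
    (hx : T ≤ maxCombine T a b) :
    2 * T₀ - T + ∫ y, maxCombine T (f y) (g y) ∂ν ≤ maxCombine T a b := by
  have hfi : Integrable f ν := integrable_of_ae_abs_sub_le hf.aestronglyMeasurable hfa
  have hgi : Integrable g ν := integrable_of_ae_abs_sub_le hg.aestronglyMeasurable hgb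
  have hγi : Integrable (fun y => maxCombine T (f y) (g y)) ν := by
    refine integrable_of_ae_abs_sub_le (c := maxCombine T a b) (T := T) ?_ ?_
    · exact (measurable_const.max ((hf.sub_const _).max (hg.sub_const _))).aestronglyMeasurable
    · filter_upwards [hfa, hgb] with y hfy hgy using abs_maxCombine_sub_le hfy hgy
  rcases lt_or_ge b (a + T) with hba | hab
  · have ha := three_mul_le_of_le_maxCombine hT hba hx
    have hint := integral_le_of_ae_le_add_const (c := -(2 * T)) hγi hfi <| by
      filter_upwards [hfa, hgb] with y hfy hgy
      linarith [maxCombine_le_of_three_mul_le hfy hgy hba ha]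
    linarith [hfd (by linarith), le_maxCombine_of_le_left (b := b) (le_refl (a - 2 * T))]
  rcases lt_or_ge a T with ha | ha
  · have hb := six_mul_le_of_le_maxCombine hT ha hx
    have hint := integral_le_of_ae_le_add_const (c := -(5 * T)) hγi hgi <| by
      filter_upwards [hfa, hgb] with y hfy hgy
      linarith [maxCombine_le_of_six_mul_le hfy hgy ha hb]
    linarith [hgd hab, le_maxCombine_of_le_right (a := a) (le_refl (b - 5 * T))]
  · have hint := integral_le_of_ae_le_add_const (c := maxCombine T a b + T - a - b) hγi
      (g := fun y => f y + g y) (hfi.add hgi) <| by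
        filter_upwards [hfa, hgb] with y hfy hgy
        linarith [maxCombine_le_add_of_le hfy hgy hx]
    rw [integral_add hfi hgi] at hint
    linarith [hfd ha, hgd hab]

end Integral

theorem maxing_to_margulis_general
    {X : Type*} [MeasurableSpace X]
    (μ : Measure X)
    (κ : Kernel X X) [IsMarkovKernel κ]
    (T₀ T₁ ε : ℝ) (hT₀ : 0 < T₀) (hT₀T₁ : T₀ < T₁)
    (α β : X → ℝ) (hαmeas : Measurable α) (hβmeas : Measurable β)
    -- `α` is an `(ε; T₀, T₁)`-additive Margulis function:
    (hαMa : ∀ᵐ x ∂μ, ∀ᵐ y ∂(κ x), |α y - α x| ≤ T₁)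
    (hαMb : μ {x | T₁ ≤ α x ∧ α x < T₀ + ∫ y, α y ∂(κ x)} < ENNReal.ofReal ε)
    -- `β` satisfies (M-a) with constant `T₁` and the modified inequality (M-b):
    (hβMa : ∀ᵐ x ∂μ, ∀ᵐ y ∂(κ x), |β y - β x| ≤ T₁)
    (hβMb : μ {x | α x + T₁ ≤ β x ∧ β x < T₀ + ∫ y, β y ∂(κ x)} < ENNReal.ofReal ε) :
    (∀ᵐ x ∂μ, ∀ᵐ y ∂(κ x),
        |max 0 (max (α y - 2 * T₁) (β y - 5 * T₁)) -
          max 0 (max (α x - 2 * T₁) (β x - 5 * T₁))| ≤ T₁) ∧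
    μ {x | T₁ ≤ max 0 (max (α x - 2 * T₁) (β x - 5 * T₁)) ∧
          max 0 (max (α x - 2 * T₁) (β x - 5 * T₁)) <
            (2 * T₀ - T₁) + ∫ y, max 0 (max (α y - 2 * T₁) (β y - 5 * T₁)) ∂(κ x)}
      < ENNReal.ofReal (2 * ε) := by
  refine ⟨?_, ?_⟩
  · filter_upwards [hαMa, hβMa] with x hαx hβx
    filter_upwards [hαx, hβx] with y hαy hβy using abs_maxCombine_sub_le hαy hβy
  have hbad : {x | T₁ ≤ maxCombine T₁ (α x) (β x) ∧ maxCombine T₁ (α x) (β x) <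
        (2 * T₀ - T₁) + ∫ y, maxCombine T₁ (α y) (β y) ∂(κ x)} ≤ᵐ[μ]
      ({x | T₁ ≤ α x ∧ α x < T₀ + ∫ y, α y ∂(κ x)} ∪
        {x | α x + T₁ ≤ β x ∧ β x < T₀ + ∫ y, β y ∂(κ x)} : Set X) := by
    filter_upwards [hαMa, hβMa] with x hαx hβx ⟨hx, hdrift⟩
    show x ∈ (_ ∪ _ : Set X)
    by_contra hgood
    simp only [Set.mem_union, Set.mem_ofPred_eq, not_or, not_and, not_lt] at hgood
    exact hdrift.not_ge <| maxCombine_drift hαmeas hβmeas (hT₀.trans hT₀T₁) hT₀T₁.le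
      hαx hβx hgood.1 hgood.2 hx
  calc _ ≤ _ := measure_mono_ae hbad
    _ ≤ _ := measure_union_le _ _
    _ < ENNReal.ofReal ε + ENNReal.ofReal ε := ENNReal.add_lt_add hαMb hβMb
    _ = ENNReal.ofReal (2 * ε) := by
        rw [ENNReal.ofReal_mul zero_le_two, ENNReal.ofReal_ofNat, two_mul]

/-- **Claim (combining Margulis functions).**
If `α` is an `(ε; T₀, T₁)`-additive Margulis function with `T₀ > T₁/2`, and `β ≥ 0`
satisfies condition (M-a) with constant `T₁` together with
`μ {x : α x + T₁ ≤ β x < T₀ + ∫ β d(κ x)} < ε`, then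
`γ = max(0, α − 2T₁, β − 5T₁)` is a `(2ε; 2T₀ − T₁, T₁)`-additive Margulis function. -/
theorem maxing_to_margulis
    {X : Type*} [MeasurableSpace X]
    (μ : Measure X) [IsProbabilityMeasure μ]
    (κ : Kernel X X) [IsMarkovKernel κ]
    (hstat : ∀ E : Set X, MeasurableSet E → μ E = ∫⁻ x, κ x E ∂μ)
    (T₀ T₁ ε : ℝ) (hT₀ : 0 < T₀) (hT₀T₁ : T₀ < T₁) (hT₀big : T₁ / 2 < T₀) (hε : 0 < ε)
    (α β : X → ℝ) (hαmeas : Measurable α) (hβmeas : Measurable β)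
    (hαnonneg : ∀ x, 0 ≤ α x) (hβnonneg : ∀ x, 0 ≤ β x)
    -- `α` is an `(ε; T₀, T₁)`-additive Margulis function:
    (hαMa : ∀ᵐ x ∂μ, ∀ᵐ y ∂(κ x), |α y - α x| ≤ T₁)
    (hαMb : μ {x | T₁ ≤ α x ∧ α x < T₀ + ∫ y, α y ∂(κ x)} < ENNReal.ofReal ε)
    -- `β` satisfies (M-a) with constant `T₁` and the modified inequality (M-b):
    (hβMa : ∀ᵐ x ∂μ, ∀ᵐ y ∂(κ x), |β y - β x| ≤ T₁)
    (hβMb : μ {x | α x + T₁ ≤ β x ∧ β x < T₀ + ∫ y, β y ∂(κ x)} < ENNReal.ofReal ε) :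
    (∀ᵐ x ∂μ, ∀ᵐ y ∂(κ x),
        |max 0 (max (α y - 2 * T₁) (β y - 5 * T₁)) -
          max 0 (max (α x - 2 * T₁) (β x - 5 * T₁))| ≤ T₁) ∧
    μ {x | T₁ ≤ max 0 (max (α x - 2 * T₁) (β x - 5 * T₁)) ∧
          max 0 (max (α x - 2 * T₁) (β x - 5 * T₁)) <
            (2 * T₀ - T₁) + ∫ y, max 0 (max (α y - 2 * T₁) (β y - 5 * T₁)) ∂(κ x)}
      < ENNReal.ofReal (2 * ε) :=
  maxing_to_margulis_general μ κ T₀ T₁ ε hT₀ hT₀T₁ α β hαmeas hβmeas hαMa hαMb hβMa hβMb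
end

section
/- For every integer n ≥ 1 there exists a constant C > 0 such that for every nonzero homogeneous polynomial p ∈ ℝ[X, Y] of degree n: ∫₀¹ log|p(s, 1)| ds ≥ log N(p) − C, where N(p) = sup{|p(x, y)| : x² + y² ≤ 1}. (In particular the integral is finite, since for nonzero homogeneous p the polynomial s ↦ p(s, 1) is not identically zero.) -/
open MeasureTheory

/-- The norm `N(p) = sup {|p(x,y)| : x² + y² ≤ 1}` on polynomials in two real variables. -/
noncomputable def polyBallNorm (p : MvPolynomial (Fin 2) ℝ) : ℝ :=
  sSup {r : ℝ | ∃ x y : ℝ, x ^ 2 + y ^ 2 ≤ 1 ∧ r = |MvPolynomial.eval ![x, y] p|}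

/-!
Put `q(s) = p(s, 1)`, so that `p` is the degree-`n` homogenization of `q`, and compare both
sides with the Mahler measure `M(q) = |c| ∏ max 1 |zᵢ|` (`c` the leading coefficient, `zᵢ`
the complex roots).

Upper bound: every coefficient of `q` is at most `2 ^ n * M(q)` in absolute value, and on the
unit disc `|p(x, y)| = |∑ qₖ xᵏ yⁿ⁻ᵏ| ≤ ∑ |qₖ|`, so `N(p) ≤ (n + 1) 2ⁿ M(q)`.

Lower bound: `∫₀¹ log |q| = log |c| + ∑ᵢ ∫₀¹ log |s - zᵢ| ds`, and each root contributes at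
least `log⁺ |zᵢ| - 17`: a root with `|z| ≥ 2` stays at distance `≥ |z| / 2` from `[0, 1]`,
while for a root near `[0, 1]` we use `|s - z| ≥ |s - Re z|` and the explicit value of
`∫₀¹ log |s - a| ds`.
-/

open Real Polynomial Finset

namespace Real

lemma abs_mul_log_le_one_add_sq (x : ℝ) : |x * log x| ≤ 1 + x ^ 2 := by
  rw [abs_mul, ← log_abs, ← sq_abs]
  rcases le_total |x| 1 with h | h
  · rcases eq_or_ne x 0 with rfl | hx
    · simp
    have := abs_log_mul_self_lt |x| (abs_pos.2 hx) h
    rw [abs_mul, abs_abs] at this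
    nlinarith [sq_nonneg |x|]
  · have : log |x| ≤ |x| - 1 := log_le_sub_one_of_pos (by linarith)
    rw [abs_of_nonneg (log_nonneg h)]
    nlinarith [log_nonneg h]

lemma integral_log_sub (a : ℝ) :
    ∫ s in (0 : ℝ)..1, log (s - a) = (1 - a) * log (1 - a) - (-a) * log (-a) - 1 := by
  rw [intervalIntegral.integral_comp_sub_right (fun s ↦ log s), integral_log]
  ring_nf

lemma neg_sixteen_le_integral_log_sub {a : ℝ} (ha : |a| ≤ 2) :
    -16 ≤ ∫ s in (0 : ℝ)..1, log (s - a) := by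
  rw [integral_log_sub]
  have h₁ := abs_le.1 (abs_mul_log_le_one_add_sq (1 - a))
  have h₂ := abs_le.1 (abs_mul_log_le_one_add_sq (-a))
  have h₃ := abs_le.1 ha
  nlinarith

end Real

namespace Polynomial

section Homogenize

variable {R : Type*} [CommSemiring R]

lemma eval_homogenize_eq_sum (q : R[X]) (n : ℕ) (x : Fin 2 → R) :
    MvPolynomial.eval x (q.homogenize n) =
      ∑ kl ∈ antidiagonal n, q.coeff kl.1 * x 0 ^ kl.1 * x 1 ^ kl.2 := by
  simp [homogenize, MvPolynomial.eval_monomial, Finsupp.prod_fintype, mul_assoc]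

lemma natDegree_aeval_X_one_le_totalDegree (p : MvPolynomial (Fin 2) R) :
    (MvPolynomial.aeval ![(X : R[X]), 1] p).natDegree ≤ p.totalDegree := by
  conv_lhs => rw [p.as_sum, map_sum]
  refine natDegree_sum_le_of_forall_le _ _ fun d hd ↦ ?_
  rw [MvPolynomial.aeval_monomial, Finsupp.prod_fintype _ _ (by simp)]
  simp only [Fin.prod_univ_two, Matrix.cons_val_zero, Matrix.cons_val_one, one_pow, mul_one,
    ← C_eq_algebraMap]
  exact (natDegree_C_mul_X_pow_le _ _).trans
    ((MvPolynomial.monomial_le_degreeOf 0 hd).trans (p.degreeOf_le_totalDegree 0))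

lemma eval_aeval_X_one (p : MvPolynomial (Fin 2) R) (s : R) :
    (MvPolynomial.aeval ![(X : R[X]), 1] p).eval s = MvPolynomial.eval ![s, 1] p := by
  rw [← coe_aeval_eq_eval, ← AlgHom.comp_apply, MvPolynomial.comp_aeval]
  have : (fun i ↦ aeval s (![(X : R[X]), 1] i)) = ![s, 1] := by
    funext i
    fin_cases i <;> simp
  rw [this]
  rfl

end Homogenize

/-- The analogue of `logMahlerMeasure` with the unit circle replaced by the unit interval. -/
noncomputable def logIntegral (f : ℂ[X]) : ℝ := ∫ s in (0 : ℝ)..1, log ‖f.eval (s : ℂ)‖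

lemma intervalIntegrable_log_norm_eval (f : ℂ[X]) (a b : ℝ) :
    IntervalIntegrable (fun s : ℝ ↦ log ‖f.eval (s : ℂ)‖) volume a b :=
  ((Complex.ofRealCLM.analyticOnNhd _).aeval_polynomial f).meromorphicOn
    |>.intervalIntegrable_log_norm

lemma finite_setOf_eval_ofReal_eq_zero {f : ℂ[X]} (hf : f ≠ 0) :
    {s : ℝ | f.eval (s : ℂ) = 0}.Finite :=
  (f.roots.finite_toSet.preimage Complex.ofReal_injective.injOn).subset
    fun s hs ↦ by simpa [hf] using hs

lemma logIntegral_mul {f g : ℂ[X]} (hf : f ≠ 0) (hg : g ≠ 0) :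
    logIntegral (f * g) = logIntegral f + logIntegral g := by
  rw [logIntegral, logIntegral, logIntegral, ← intervalIntegral.integral_add
    (intervalIntegrable_log_norm_eval f 0 1) (intervalIntegrable_log_norm_eval g 0 1)]
  refine intervalIntegral.integral_congr_ae ?_
  filter_upwards [(finite_setOf_eval_ofReal_eq_zero (mul_ne_zero hf hg)).countable.ae_notMem _]
    with s hs _
  simp only [eval_mul, mul_eq_zero, not_or] at hs
  rw [eval_mul, norm_mul, log_mul (norm_ne_zero_iff.2 hs.1) (norm_ne_zero_iff.2 hs.2)]

lemma logIntegral_C (a : ℂ) : logIntegral (C a) = log ‖a‖ := by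
  simp [logIntegral]

lemma logIntegral_map_ofReal (q : ℝ[X]) :
    (q.map (algebraMap ℝ ℂ)).logIntegral = ∫ s in (0 : ℝ)..1, log |q.eval s| := by
  refine intervalIntegral.integral_congr fun s _ ↦ ?_
  rw [← Complex.coe_algebraMap, eval_map_algebraMap, aeval_algebraMap_apply_eq_algebraMap_eval,
    Complex.coe_algebraMap, Complex.norm_real, norm_eq_abs]

lemma log_norm_sub_log_two_le_logIntegral_X_sub_C {z : ℂ} (hz : 2 ≤ ‖z‖) :
    log ‖z‖ - log 2 ≤ logIntegral (X - C z) := by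
  have hbound : ∀ s ∈ Set.Icc (0 : ℝ) 1, log ‖z‖ - log 2 ≤ log ‖(X - C z).eval (s : ℂ)‖ := by
    intro s hs
    have hs₁ : ‖(s : ℂ)‖ ≤ 1 := by simpa [abs_of_nonneg hs.1] using hs.2
    have := norm_sub_norm_le z (s : ℂ)
    rw [norm_sub_rev] at this
    rw [← log_div (by positivity) two_ne_zero, eval_sub, eval_X, eval_C]
    exact log_le_log (by positivity) (by linarith)
  simpa [logIntegral] using intervalIntegral.integral_mono_on zero_le_one
    intervalIntegrable_const (intervalIntegrable_log_norm_eval (X - C z) 0 1) hbound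

lemma integral_log_sub_re_le_logIntegral_X_sub_C (z : ℂ) :
    ∫ s in (0 : ℝ)..1, log (s - z.re) ≤ logIntegral (X - C z) := by
  have hlog : IntervalIntegrable (fun s ↦ log (s - z.re)) volume 0 1 := by
    simpa using
      (intervalIntegral.intervalIntegrable_log' (a := -z.re) (b := 1 - z.re)).comp_sub_right z.re
  refine intervalIntegral.integral_mono_ae zero_le_one hlog
    (intervalIntegrable_log_norm_eval (X - C z) 0 1) ?_
  filter_upwards [Measure.ae_ne _ z.re] with s hs
  rw [← log_abs, eval_sub, eval_X, eval_C]
  refine log_le_log (abs_pos.2 (sub_ne_zero.2 hs)) ?_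
  simpa using Complex.abs_re_le_norm ((s : ℂ) - z)

lemma posLog_norm_sub_le_logIntegral_X_sub_C (z : ℂ) :
    log⁺ ‖z‖ - 17 ≤ logIntegral (X - C z) := by
  have hlog₂ := log_two_lt_d9
  rcases le_or_gt 2 ‖z‖ with hz | hz
  · rw [posLog_eq_log (by rw [abs_norm]; linarith)]
    linarith [log_norm_sub_log_two_le_logIntegral_X_sub_C hz]
  · have hre : |z.re| ≤ 2 := (Complex.abs_re_le_norm z).trans hz.le
    have : log⁺ ‖z‖ ≤ log 2 :=
      (posLog_le_posLog (norm_nonneg z) hz.le).trans_eq (posLog_eq_log (by norm_num))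
    linarith [neg_sixteen_le_integral_log_sub hre, integral_log_sub_re_le_logIntegral_X_sub_C z]

lemma logMahlerMeasure_sub_le_logIntegral_multiset_prod (s : Multiset ℂ) :
    ((s.map (X - C ·)).prod).logMahlerMeasure - 17 * Multiset.card s ≤
      logIntegral (s.map (X - C ·)).prod := by
  induction s using Multiset.induction_on with
  | empty => simp [logIntegral]
  | cons z s ih =>
    have hz : X - C z ≠ 0 := X_sub_C_ne_zero z
    have hs := (monic_multiset_prod_of_monic s (X - C ·) fun w _ ↦ monic_X_sub_C w).ne_zero
    rw [Multiset.map_cons, Multiset.prod_cons, logMahlerMeasure_mul_eq_add_logMahlerMeasure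
      (mul_ne_zero hz hs), logIntegral_mul hz hs, logMahlerMeasure_X_sub_C, Multiset.card_cons]
    push_cast
    linarith [posLog_norm_sub_le_logIntegral_X_sub_C z]

theorem logMahlerMeasure_sub_le_logIntegral {f : ℂ[X]} (hf : f ≠ 0) :
    f.logMahlerMeasure - 17 * f.natDegree ≤ f.logIntegral := by
  have hfac := (IsAlgClosed.splits f).eq_prod_roots
  have hc : f.leadingCoeff ≠ 0 := leadingCoeff_ne_zero.2 hf
  rw [(IsAlgClosed.splits f).natDegree_eq_card_roots]
  generalize f.roots = m at hfac ⊢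
  generalize f.leadingCoeff = c at hfac hc
  subst hfac
  have hm := (monic_multiset_prod_of_monic m (X - C ·) fun z _ ↦ monic_X_sub_C z).ne_zero
  rw [logMahlerMeasure_C_mul hc hm, logIntegral_mul (C_ne_zero.2 hc) hm, logIntegral_C]
  linarith [logMahlerMeasure_sub_le_logIntegral_multiset_prod m]

lemma norm_coeff_le_two_pow_mul_mahlerMeasure (f : ℂ[X]) (k : ℕ) :
    ‖f.coeff k‖ ≤ 2 ^ f.natDegree * f.mahlerMeasure :=
  (f.norm_coeff_le_choose_mul_mahlerMeasure k).trans <| by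
    gcongr
    · exact f.mahlerMeasure_nonneg
    · exact_mod_cast Nat.choose_le_two_pow _ _

end Polynomial

lemma polyBallNorm_le {p : MvPolynomial (Fin 2) ℝ} {B : ℝ}
    (hB : ∀ x y : ℝ, x ^ 2 + y ^ 2 ≤ 1 → |MvPolynomial.eval ![x, y] p| ≤ B) :
    polyBallNorm p ≤ B :=
  csSup_le ⟨_, 0, 0, by norm_num, rfl⟩ fun _ ⟨x, y, hxy, hr⟩ ↦ hr ▸ hB x y hxy

lemma abs_eval_le_polyBallNorm {p : MvPolynomial (Fin 2) ℝ} {B : ℝ}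
    (hB : ∀ x y : ℝ, x ^ 2 + y ^ 2 ≤ 1 → |MvPolynomial.eval ![x, y] p| ≤ B) {x y : ℝ}
    (hxy : x ^ 2 + y ^ 2 ≤ 1) :
    |MvPolynomial.eval ![x, y] p| ≤ polyBallNorm p :=
  le_csSup ⟨B, fun _ ⟨x, y, hxy, hr⟩ ↦ hr ▸ hB x y hxy⟩ ⟨x, y, hxy, rfl⟩

lemma abs_eval_homogenize_le {q : ℝ[X]} {n : ℕ} {B : ℝ} (hB : ∀ k, |q.coeff k| ≤ B)
    {x y : ℝ} (hxy : x ^ 2 + y ^ 2 ≤ 1) :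
    |MvPolynomial.eval ![x, y] (q.homogenize n)| ≤ (n + 1) * B := by
  have hx : |x| ≤ 1 := abs_le_one_iff_mul_self_le_one.2 (by nlinarith [sq_nonneg y])
  have hy : |y| ≤ 1 := abs_le_one_iff_mul_self_le_one.2 (by nlinarith [sq_nonneg x])
  rw [eval_homogenize_eq_sum]
  refine (abs_sum_le_sum_abs _ _).trans <| (sum_le_card_nsmul _ _ B fun kl _ ↦ ?_).trans (by simp)
  simp only [Matrix.cons_val_zero, Matrix.cons_val_one, abs_mul, abs_pow]
  have hxk : |x| ^ kl.1 ≤ 1 := pow_le_one₀ (abs_nonneg x) hx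
  have hyk : |y| ^ kl.2 ≤ 1 := pow_le_one₀ (abs_nonneg y) hy
  exact ((mul_le_of_le_one_right (by positivity) hyk).trans
    (mul_le_of_le_one_right (abs_nonneg _) hxk)).trans (hB kl.1)

lemma polyBallNorm_homogenize_pos {q : ℝ[X]} {n : ℕ} {B : ℝ} (hq : q ≠ 0)
    (hqn : q.natDegree ≤ n) (hB : ∀ k, |q.coeff k| ≤ B) :
    0 < polyBallNorm (q.homogenize n) := by
  obtain ⟨t, ht⟩ : ∃ t, q.eval t ≠ 0 := by
    by_contra! h
    exact hq (Polynomial.funext (by simpa using h))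
  set r := 1 + |t|
  have hr : 0 < r := by positivity
  have hxy : (t / r) ^ 2 + (1 / r) ^ 2 ≤ 1 := by
    rw [div_pow, div_pow, ← add_div, div_le_one (by positivity), ← sq_abs t]
    nlinarith [abs_nonneg t]
  have heval : MvPolynomial.eval ![t / r, 1 / r] (q.homogenize n) = q.eval t * (1 / r) ^ n := by
    rw [eval_homogenize hqn _ (by simp [hr.ne'])]
    simp [hr.ne']
  calc 0 < |MvPolynomial.eval ![t / r, 1 / r] (q.homogenize n)| := by
        rw [heval]
        positivity
    _ ≤ _ := abs_eval_le_polyBallNorm (fun x y h ↦ abs_eval_homogenize_le hB h) hxy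

lemma log_polyBallNorm_homogenize_le {q : ℝ[X]} {n : ℕ} (hq : q ≠ 0) (hqn : q.natDegree ≤ n) :
    log (polyBallNorm (q.homogenize n)) ≤
      log ((n + 1) * 2 ^ n) + (q.map (algebraMap ℝ ℂ)).logMahlerMeasure := by
  set f := q.map (algebraMap ℝ ℂ)
  have hf : f ≠ 0 := (Polynomial.map_ne_zero_iff (algebraMap ℝ ℂ).injective).2 hq
  have hcoeff (k : ℕ) : |q.coeff k| ≤ 2 ^ n * f.mahlerMeasure := by
    have := norm_coeff_le_two_pow_mul_mahlerMeasure f k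
    rw [coeff_map, Complex.coe_algebraMap, Complex.norm_real, norm_eq_abs, natDegree_map] at this
    exact this.trans (by gcongr; exacts [f.mahlerMeasure_nonneg, one_le_two])
  rw [logMahlerMeasure_eq_log_MahlerMeasure, ← log_mul (by positivity)
    (mahlerMeasure_pos_of_ne_zero hf).ne', mul_assoc]
  exact log_le_log (polyBallNorm_homogenize_pos hq hqn hcoeff)
    (polyBallNorm_le fun x y h ↦ abs_eval_homogenize_le hcoeff h)

lemma logMahlerMeasure_map_sub_le_integral_log_abs_eval {q : ℝ[X]} (hq : q ≠ 0) :
    (q.map (algebraMap ℝ ℂ)).logMahlerMeasure - 17 * q.natDegree ≤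
      ∫ s in (0 : ℝ)..1, log |q.eval s| := by
  have := logMahlerMeasure_sub_le_logIntegral
    ((Polynomial.map_ne_zero_iff (algebraMap ℝ ℂ).injective).2 hq)
  rwa [logIntegral_map_ofReal, natDegree_map] at this

/-- **(Lower bound in the proof of Claim 4.12.)**
For every `n ≥ 1` there is `C > 0` such that for every nonzero homogeneous polynomial `p`
of degree `n` in two real variables,
`∫₀¹ log |p(s, 1)| ds ≥ log N(p) − C`. -/
theorem log_integral_lower_bound (n : ℕ) (hn : 1 ≤ n) :
    ∃ C > (0 : ℝ), ∀ p : MvPolynomial (Fin 2) ℝ, p ≠ 0 → p.IsHomogeneous n →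
      ∫ s in Set.Icc (0 : ℝ) 1, Real.log |MvPolynomial.eval ![s, 1] p| ≥
        Real.log (polyBallNorm p) - C := by
  refine ⟨log ((n + 1) * 2 ^ n) + 17 * n, ?_, fun p hp0 hp ↦ ?_⟩
  · have hn' : (1 : ℝ) ≤ n := by exact_mod_cast hn
    have : 0 ≤ log ((n + 1) * 2 ^ n) :=
      log_nonneg (one_le_mul_of_one_le_of_one_le (by linarith) (one_le_pow₀ one_le_two))
    linarith
  set q : ℝ[X] := MvPolynomial.aeval ![X, 1] p
  have hpq : q.homogenize n = p := homogenize_eq_of_isHomogeneous hp rfl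
  have hq0 : q ≠ 0 := fun h ↦ hp0 (by rw [← hpq, h, homogenize_zero])
  have hqn : q.natDegree ≤ n := (natDegree_aeval_X_one_le_totalDegree p).trans hp.totalDegree_le
  have hupper := hpq ▸ log_polyBallNorm_homogenize_le hq0 hqn
  have hlower := logMahlerMeasure_map_sub_le_integral_log_abs_eval hq0
  have hqn' : (q.natDegree : ℝ) ≤ n := by exact_mod_cast hqn
  rw [integral_Icc_eq_integral_Ioc, ← intervalIntegral.integral_of_le zero_le_one]
  simp_rw [← eval_aeval_X_one p]
  linarith
end

section
/- Let w₀ = [[0, i],[−i, 0]] ∈ M₂(ℂ). For every g ∈ SL₂(ℂ): gᴴ·w₀·g = −w₀ if and only if there exists a 2×2 real matrix h with det h = −1 such that g = i·h. -/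
/-- The Hermitian matrix `w₀ = [[0, i], [−i, 0]]`. -/
noncomputable def w₀ : Matrix (Fin 2) (Fin 2) ℂ := !![0, Complex.I; -Complex.I, 0]

/-- **(Normalizer computation.)**
For `g ∈ SL₂(ℂ)`: `gᴴ·w₀·g = −w₀` if and only if `g = i·h` for some real `2×2` matrix `h`
with `det h = −1`. -/
theorem antistabilizer_of_w0 (g : Matrix (Fin 2) (Fin 2) ℂ) (hg : g.det = 1) :
    g.conjTranspose * w₀ * g = -w₀ ↔
      ∃ h : Matrix (Fin 2) (Fin 2) ℝ, h.det = -1 ∧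
        g = Complex.I • h.map (Complex.ofReal) := by
  constructor
  · intro hw
    rw [Matrix.det_fin_two] at hg
    have he := Matrix.ext_iff.mpr hw
    have h00 := he 0 0
    have h01 := he 0 1
    have h10 := he 1 0
    have h11 := he 1 1
    simp [w₀, Matrix.mul_apply, Fin.sum_univ_two, Matrix.conjTranspose_apply] at h00 h01 h10 h11
    have e1 : (starRingEnd ℂ) (g 0 0) * g 1 0 = g 0 0 * (starRingEnd ℂ) (g 1 0) :=
      mul_left_cancel₀ Complex.I_ne_zero (by linear_combination h00)
    have e2 : (starRingEnd ℂ) (g 0 0) * g 1 1 - g 0 1 * (starRingEnd ℂ) (g 1 0) = -1 :=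
      mul_left_cancel₀ Complex.I_ne_zero (by linear_combination h01)
    have e3 : (starRingEnd ℂ) (g 0 1) * g 1 0 - g 0 0 * (starRingEnd ℂ) (g 1 1) = 1 :=
      mul_left_cancel₀ Complex.I_ne_zero (by linear_combination h10)
    have e4 : (starRingEnd ℂ) (g 0 1) * g 1 1 = g 0 1 * (starRingEnd ℂ) (g 1 1) :=
      mul_left_cancel₀ Complex.I_ne_zero (by linear_combination h11)
    have ha : (starRingEnd ℂ) (g 0 0) = -(g 0 0) := by
      linear_combination g 0 0 * e2 - g 0 1 * e1 - (starRingEnd ℂ) (g 0 0) * hg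
    have hb : (starRingEnd ℂ) (g 0 1) = -(g 0 1) := by
      linear_combination g 0 0 * e4 - g 0 1 * e3 - (starRingEnd ℂ) (g 0 1) * hg
    have hc : (starRingEnd ℂ) (g 1 0) = -(g 1 0) := by
      linear_combination g 1 0 * e2 - g 1 1 * e1 - (starRingEnd ℂ) (g 1 0) * hg
    have hd : (starRingEnd ℂ) (g 1 1) = -(g 1 1) := by
      linear_combination g 1 0 * e4 - g 1 1 * e3 - (starRingEnd ℂ) (g 1 1) * hg
    have hre : ∀ i j, (g i j).re = 0 := by
      intro i j
      have h1 : (starRingEnd ℂ) (g i j) = -(g i j) := by fin_cases i <;> fin_cases j <;> assumption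
      have h2 := congrArg Complex.re h1
      simp at h2
      linarith
    refine ⟨Matrix.of fun i j => (g i j).im, ?_, ?_⟩
    · rw [Matrix.det_fin_two]
      have h1 := congrArg Complex.re hg
      simp [Complex.mul_re, hre] at h1
      simp only [Matrix.of_apply]
      linarith
    · ext i j
      simp only [Matrix.smul_apply, Matrix.map_apply, Matrix.of_apply, smul_eq_mul]
      apply Complex.ext <;> simp [hre]
  · rintro ⟨h, hdet, rfl⟩
    obtain ⟨a, b, c, d, rfl⟩ : ∃ a b c d, h = !![a, b; c, d] :=
      ⟨_, _, _, _, Matrix.eta_fin_two h⟩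
    rw [Matrix.det_fin_two_of] at hdet
    have h1 : (!![a, b; c, d]).map Complex.ofReal = !![(a:ℂ), b; c, d] := by
      ext i j; fin_cases i <;> fin_cases j <;> simp
    rw [h1]
    have h2 : Complex.I • (!![(a:ℂ), b; c, d]) =
        !![Complex.I*a, Complex.I*b; Complex.I*c, Complex.I*d] := by
      ext i j; fin_cases i <;> fin_cases j <;> simp
    rw [h2]
    have h3 : (!![Complex.I*(a:ℂ), Complex.I*b; Complex.I*c, Complex.I*d]).conjTranspose
        = !![-(Complex.I*a), -(Complex.I*c); -(Complex.I*b), -(Complex.I*d)] := by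
      ext i j
      fin_cases i <;> fin_cases j <;>
        simp [Matrix.conjTranspose_apply, map_mul, Complex.conj_I, Complex.conj_ofReal]
    rw [h3, w₀, Matrix.mul_fin_two, Matrix.mul_fin_two]
    ext i j
    fin_cases i <;> fin_cases j <;>
      simp [Complex.ext_iff, Complex.mul_re, Complex.mul_im] <;>
      first
      | ring1
      | (linear_combination hdet)
      | (linear_combination -hdet)
end

section
/- For every vector v = (v₁, v₂) ∈ ℂ²: inf{‖g·v‖² : g ∈ SL₂(ℝ)} = 2·|Im(v₁·conj(v₂))|, where g ∈ SL₂(ℝ) acts ℂ-linearly on ℂ² as a complex matrix with real entries and ‖·‖ is the standard Hermitian norm on ℂ². Moreover, if Im(v₁·conj(v₂)) ≠ 0, then the infimum is attained: there exists g ∈ SL₂(ℝ) with ‖g·v‖² = 2·|Im(v₁·conj(v₂))|. -/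
/-!
Writing `v = x + i y` with `x, y ∈ ℝ²`, the quantity `Im(v₁ · conj v₂) = -det [x y]` is invariant
under `SL₂(ℝ)`, and `2 |Im(w₁ · conj w₂)| ≤ ‖w₁‖² + ‖w₂‖²` for every `w`, which gives the lower
bound. If `I = Im(v₁ · conj v₂) ≠ 0`, a suitable `g` sends `v` to `(s, -i I / s)` with `s² = |I|`,
where the bound is an equality. If `I = 0`, then `v` is a complex multiple of a nonzero real vector,
which a matrix of `SL₂(ℝ)` rotates onto the first axis and shrinks by an arbitrary factor `t`.
-/

open ComplexConjugate Filter Topology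

noncomputable def normSqMulVec (g : Matrix (Fin 2) (Fin 2) ℝ) (v₁ v₂ : ℂ) : ℝ :=
  ‖(g 0 0 : ℂ) * v₁ + (g 0 1 : ℂ) * v₂‖ ^ 2 + ‖(g 1 0 : ℂ) * v₁ + (g 1 1 : ℂ) * v₂‖ ^ 2

theorem normSqMulVec_of (a b c d : ℝ) (v₁ v₂ : ℂ) :
    normSqMulVec !![a, b; c, d] v₁ v₂ =
      ‖(a : ℂ) * v₁ + b * v₂‖ ^ 2 + ‖(c : ℂ) * v₁ + d * v₂‖ ^ 2 :=
  rfl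

theorem im_mul_conj (v₁ v₂ : ℂ) : (v₁ * conj v₂).im = v₁.im * v₂.re - v₁.re * v₂.im := by
  rw [Complex.mul_im, Complex.conj_re, Complex.conj_im]
  ring

theorem im_mul_conj_real_comb (a b c d : ℝ) (v₁ v₂ : ℂ) :
    (((a : ℂ) * v₁ + b * v₂) * conj ((c : ℂ) * v₁ + d * v₂)).im =
      (a * d - b * c) * (v₁ * conj v₂).im := by
  simp only [map_add, map_mul, Complex.conj_ofReal, Complex.mul_im, Complex.add_im, Complex.add_re,
    Complex.mul_re, Complex.conj_re, Complex.conj_im, Complex.ofReal_re, Complex.ofReal_im]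
  ring

theorem two_mul_abs_im_mul_conj_le (w₁ w₂ : ℂ) : 2 * |(w₁ * conj w₂).im| ≤ ‖w₁‖ ^ 2 + ‖w₂‖ ^ 2 :=
  calc 2 * |(w₁ * conj w₂).im| ≤ 2 * (‖w₁‖ * ‖w₂‖) := by
        grw [Complex.abs_im_le_norm, norm_mul, Complex.norm_conj]
    _ ≤ ‖w₁‖ ^ 2 + ‖w₂‖ ^ 2 := by rw [← mul_assoc]; exact two_mul_le_add_sq _ _

theorem two_mul_abs_im_mul_conj_le_normSqMulVec {g : Matrix (Fin 2) (Fin 2) ℝ} (hg : g.det = 1)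
    (v₁ v₂ : ℂ) : 2 * |(v₁ * conj v₂).im| ≤ normSqMulVec g v₁ v₂ := by
  have := two_mul_abs_im_mul_conj_le ((g 0 0 : ℂ) * v₁ + (g 0 1 : ℂ) * v₂)
    ((g 1 0 : ℂ) * v₁ + (g 1 1 : ℂ) * v₂)
  rwa [im_mul_conj_real_comb, ← Matrix.det_fin_two, hg, one_mul] at this

theorem exists_normSqMulVec_eq_sq_add_sq {v₁ v₂ : ℂ} (hv : (v₁ * conj v₂).im ≠ 0) {s : ℝ}
    (hs : s ≠ 0) :
    ∃ g : Matrix (Fin 2) (Fin 2) ℝ, g.det = 1 ∧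
      normSqMulVec g v₁ v₂ = s ^ 2 + ((v₁ * conj v₂).im / s) ^ 2 := by
  set I := (v₁ * conj v₂).im
  have hI : I = v₁.im * v₂.re - v₁.re * v₂.im := im_mul_conj v₁ v₂
  refine ⟨!![-s * v₂.im / I, s * v₁.im / I; -v₂.re / s, v₁.re / s], ?_, ?_⟩
  · rw [Matrix.det_fin_two_of]
    field_simp
    linear_combination -hI
  · have h₁ : ((-s * v₂.im / I : ℝ) : ℂ) * v₁ + ((s * v₁.im / I : ℝ) : ℂ) * v₂ = s := by
      apply Complex.ext
      · simp only [Complex.add_re, Complex.re_ofReal_mul, Complex.ofReal_re]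
        field_simp
        linear_combination -hI
      · simp only [Complex.add_im, Complex.im_ofReal_mul, Complex.ofReal_im]
        field_simp
        ring
    have h₂ : ((-v₂.re / s : ℝ) : ℂ) * v₁ + ((v₁.re / s : ℝ) : ℂ) * v₂ =
        ((-I / s : ℝ) : ℂ) * Complex.I := by
      apply Complex.ext
      · simp only [Complex.add_re, Complex.re_ofReal_mul, Complex.I_re]
        field_simp
        ring
      · simp only [Complex.add_im, Complex.im_ofReal_mul, Complex.I_im]
        field_simp
        linear_combination hI
    rw [normSqMulVec_of, h₁, h₂, norm_mul, Complex.norm_I, mul_one, Complex.norm_real,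
      Complex.norm_real, Real.norm_eq_abs, Real.norm_eq_abs, sq_abs, sq_abs, neg_div, neg_sq]

theorem exists_normSqMulVec_eq_two_mul_abs {v₁ v₂ : ℂ} (hv : (v₁ * conj v₂).im ≠ 0) :
    ∃ g : Matrix (Fin 2) (Fin 2) ℝ, g.det = 1 ∧
      normSqMulVec g v₁ v₂ = 2 * |(v₁ * conj v₂).im| := by
  have hs : Real.sqrt |(v₁ * conj v₂).im| ≠ 0 := by positivity
  obtain ⟨g, hg, h⟩ := exists_normSqMulVec_eq_sq_add_sq hv hs
  refine ⟨g, hg, ?_⟩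
  rw [h, div_pow, Real.sq_sqrt (abs_nonneg _), ← sq_abs, sq,
    mul_div_cancel_right₀ _ (abs_ne_zero.2 hv)]
  ring

theorem exists_ofReal_mul_eq_of_im_mul_conj_eq_zero {v₁ v₂ : ℂ} (hv : (v₁ * conj v₂).im = 0) :
    ∃ (p q : ℝ) (z : ℂ), p ^ 2 + q ^ 2 ≠ 0 ∧ v₁ = p * z ∧ v₂ = q * z := by
  rcases eq_or_ne v₂ 0 with h₂ | h₂
  · exact ⟨1, 0, v₁, by norm_num, by simp, by simp [h₂]⟩
  · refine ⟨(v₁ / v₂).re, 1, v₂, by positivity, ?_, by simp⟩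
    have : ((v₁ / v₂).re : ℂ) = v₁ / v₂ := by
      refine Complex.ext rfl ?_
      rw [Complex.ofReal_im, Complex.div_im, ← sub_div, ← im_mul_conj, hv, zero_div]
    rw [this, div_mul_cancel₀ _ h₂]

theorem exists_normSqMulVec_eq_sq_mul (p q : ℝ) (z : ℂ) (hpq : p ^ 2 + q ^ 2 ≠ 0) {t : ℝ}
    (ht : t ≠ 0) :
    ∃ g : Matrix (Fin 2) (Fin 2) ℝ, g.det = 1 ∧
      normSqMulVec g (p * z) (q * z) = t ^ 2 * ((p ^ 2 + q ^ 2) ^ 2 * ‖z‖ ^ 2) := by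
  refine ⟨!![t * p, t * q; -q / (t * (p ^ 2 + q ^ 2)), p / (t * (p ^ 2 + q ^ 2))], ?_, ?_⟩
  · rw [Matrix.det_fin_two_of]
    field_simp
    ring
  · have h₁ : ((t * p : ℝ) : ℂ) * (p * z) + ((t * q : ℝ) : ℂ) * (q * z) =
        ((t * (p ^ 2 + q ^ 2) : ℝ) : ℂ) * z := by
      push_cast; ring
    have h₂ : ((-q / (t * (p ^ 2 + q ^ 2)) : ℝ) : ℂ) * (p * z) +
        ((p / (t * (p ^ 2 + q ^ 2)) : ℝ) : ℂ) * (q * z) = 0 := by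
      push_cast; ring
    rw [normSqMulVec_of, h₁, h₂, norm_zero, norm_mul, Complex.norm_real, Real.norm_eq_abs, mul_pow,
      sq_abs]
    ring

theorem isGLB_normSqMulVec (v₁ v₂ : ℂ) :
    IsGLB {r | ∃ g : Matrix (Fin 2) (Fin 2) ℝ, g.det = 1 ∧ r = normSqMulVec g v₁ v₂}
      (2 * |(v₁ * conj v₂).im|) := by
  refine ⟨fun r ⟨g, hg, hr⟩ => hr ▸ two_mul_abs_im_mul_conj_le_normSqMulVec hg v₁ v₂,
    fun b hb => ?_⟩
  rcases eq_or_ne (v₁ * conj v₂).im 0 with hv | hv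
  · obtain ⟨p, q, z, hpq, rfl, rfl⟩ := exists_ofReal_mul_eq_of_im_mul_conj_eq_zero hv
    rw [hv, abs_zero, mul_zero]
    have hlim : Tendsto (fun t : ℝ => t ^ 2 * ((p ^ 2 + q ^ 2) ^ 2 * ‖z‖ ^ 2)) (𝓝[≠] 0) (𝓝 0) :=
      ((continuous_pow 2).mul continuous_const).tendsto' 0 0 (by simp)
        |>.mono_left nhdsWithin_le_nhds
    refine ge_of_tendsto hlim (eventually_nhdsWithin_of_forall fun t ht => ?_)
    obtain ⟨g, hg, h⟩ := exists_normSqMulVec_eq_sq_mul p q z hpq ht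
    exact hb ⟨g, hg, h.symm⟩
  · obtain ⟨g, hg, h⟩ := exists_normSqMulVec_eq_two_mul_abs hv
    exact hb ⟨g, hg, h.symm⟩

/-- **Claim 4.31 (minimal vector length along an `SL₂(ℝ)`-orbit in `ℂ²`).**
For `v = (v₁, v₂) ∈ ℂ²`, `inf {‖g·v‖² : g ∈ SL₂(ℝ)} = 2·|Im(v₁·conj v₂)|`, and if
`Im(v₁·conj v₂) ≠ 0` the infimum is attained. -/
theorem sl2r_orbit_min_norm (v₁ v₂ : ℂ) :
    sInf {r : ℝ | ∃ g : Matrix (Fin 2) (Fin 2) ℝ, g.det = 1 ∧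
        r = ‖(g 0 0 : ℂ) * v₁ + (g 0 1 : ℂ) * v₂‖ ^ 2
            + ‖(g 1 0 : ℂ) * v₁ + (g 1 1 : ℂ) * v₂‖ ^ 2}
        = 2 * |(v₁ * (starRingEnd ℂ) v₂).im| ∧
    ((v₁ * (starRingEnd ℂ) v₂).im ≠ 0 →
      ∃ g : Matrix (Fin 2) (Fin 2) ℝ, g.det = 1 ∧
        ‖(g 0 0 : ℂ) * v₁ + (g 0 1 : ℂ) * v₂‖ ^ 2
            + ‖(g 1 0 : ℂ) * v₁ + (g 1 1 : ℂ) * v₂‖ ^ 2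
          = 2 * |(v₁ * (starRingEnd ℂ) v₂).im|) :=
  ⟨(isGLB_normSqMulVec v₁ v₂).csInf_eq ⟨_, 1, Matrix.det_one, rfl⟩,
    exists_normSqMulVec_eq_two_mul_abs⟩
end

section
/- Let Q(v) = v₁² − v₂² − v₃² − v₄² be the quadratic form of signature (1,3) on ℝ⁴. For every v ∈ ℝ⁴ with Q(v) = −1 there exist R, R' ∈ SO(3), and t ∈ ℝ with cosh t ≤ ‖v‖, such that ι(R')·A(t)·ι(R)·v = (0, 0, 0, 1), where ι(R) ∈ GL₄(ℝ) is the block-diagonal matrix fixing the first coordinate and acting by R on the last three coordinates, A(t) ∈ GL₄(ℝ) acts on the first two coordinates by [[cosh t, sinh t],[sinh t, cosh t]] and as the identity on the last two, and ‖v‖ is the Euclidean norm. -/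
/-!
Since `Q(v) = -1`, the spatial part `(v 1, v 2, v 3)` has length `√(1 + v 0 ^ 2)`, and two plane
rotations carry it to `(√(1 + v 0 ^ 2), 0, 0)`. For `t = -arsinh (v 0)` we have
`cosh t = √(1 + v 0 ^ 2)` and `sinh t = -v 0`, so the boost `A(t)` sends
`(v 0, √(1 + v 0 ^ 2), 0, 0)` to `(0, 1, 0, 0)`, which a cyclic permutation of the spatial axes
moves to `(0, 0, 0, 1)`. Finally `cosh t = √(1 + v 0 ^ 2) ≤ √(1 + 2 v 0 ^ 2) = ‖v‖`.
-/

/-- The block-diagonal action of a `3×3` matrix on `ℝ⁴`, fixing the first coordinate and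
acting on the last three coordinates. -/
def iotaAct (R : Matrix (Fin 3) (Fin 3) ℝ) (v : Fin 4 → ℝ) : Fin 4 → ℝ :=
  ![v 0,
    R 0 0 * v 1 + R 0 1 * v 2 + R 0 2 * v 3,
    R 1 0 * v 1 + R 1 1 * v 2 + R 1 2 * v 3,
    R 2 0 * v 1 + R 2 1 * v 2 + R 2 2 * v 3]

/-- The hyperbolic boost `A(t)`, acting on the first two coordinates of `ℝ⁴` by
`[[cosh t, sinh t], [sinh t, cosh t]]` and as the identity on the last two. -/
noncomputable def boostAct (t : ℝ) (v : Fin 4 → ℝ) : Fin 4 → ℝ :=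
  ![Real.cosh t * v 0 + Real.sinh t * v 1,
    Real.sinh t * v 0 + Real.cosh t * v 1,
    v 2, v 3]

open Matrix Real

lemma exists_angle_rotate_onto_axis (x y : ℝ) :
    ∃ θ : ℝ, x * cos θ + y * sin θ = √(x ^ 2 + y ^ 2) ∧ y * cos θ - x * sin θ = 0 := by
  set z : ℂ := x + y * Complex.I
  have hz : ‖z‖ = √(x ^ 2 + y ^ 2) := Complex.norm_add_mul_I x y
  have hx : ‖z‖ * cos z.arg = x := (Complex.norm_mul_cos_arg z).trans (by simp [z])
  have hy : ‖z‖ * sin z.arg = y := (Complex.norm_mul_sin_arg z).trans (by simp [z])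
  refine ⟨z.arg, ?_, ?_⟩
  · rw [← hz, ← hx, ← hy]
    linear_combination ‖z‖ * sin_sq_add_cos_sq z.arg
  · rw [← hx, ← hy]; ring

lemma mem_specialOrthogonalGroup_iff_transpose {n : Type*} [Fintype n] [DecidableEq n]
    {R : Type*} [CommRing R] {A : Matrix n n R} :
    A ∈ specialOrthogonalGroup n R ↔ Aᵀ * A = 1 ∧ A.det = 1 := by
  rw [mem_specialOrthogonalGroup_iff, mem_orthogonalGroup_iff']

noncomputable def rotation01 (θ : ℝ) : Matrix (Fin 3) (Fin 3) ℝ :=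
  !![cos θ, sin θ, 0; -sin θ, cos θ, 0; 0, 0, 1]

noncomputable def rotation12 (θ : ℝ) : Matrix (Fin 3) (Fin 3) ℝ :=
  !![1, 0, 0; 0, cos θ, sin θ; 0, -sin θ, cos θ]

lemma rotation01_mem_specialOrthogonalGroup (θ : ℝ) :
    rotation01 θ ∈ specialOrthogonalGroup (Fin 3) ℝ := by
  rw [mem_specialOrthogonalGroup_iff_transpose]
  constructor
  · ext i j; fin_cases i <;> fin_cases j <;>
      simp [rotation01, mul_apply, Fin.sum_univ_three] <;> ring_nf <;> simp
  · simp [rotation01, det_fin_three]; ring_nf; simp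

lemma rotation12_mem_specialOrthogonalGroup (θ : ℝ) :
    rotation12 θ ∈ specialOrthogonalGroup (Fin 3) ℝ := by
  rw [mem_specialOrthogonalGroup_iff_transpose]
  constructor
  · ext i j; fin_cases i <;> fin_cases j <;>
      simp [rotation12, mul_apply, Fin.sum_univ_three] <;> ring_nf <;> simp
  · simp [rotation12, det_fin_three]; ring_nf; simp

lemma rotation01_mulVec (θ a b c : ℝ) :
    rotation01 θ *ᵥ ![a, b, c] = ![a * cos θ + b * sin θ, b * cos θ - a * sin θ, c] := by
  ext i; fin_cases i <;> simp [rotation01, mulVec, dotProduct, Fin.sum_univ_three] <;> ring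

lemma rotation12_mulVec (θ a b c : ℝ) :
    rotation12 θ *ᵥ ![a, b, c] = ![a, b * cos θ + c * sin θ, c * cos θ - b * sin θ] := by
  ext i; fin_cases i <;> simp [rotation12, mulVec, dotProduct, Fin.sum_univ_three] <;> ring

lemma exists_mem_specialOrthogonalGroup_mulVec_eq_sqrt (a b c : ℝ) :
    ∃ R ∈ specialOrthogonalGroup (Fin 3) ℝ,
      R *ᵥ ![a, b, c] = ![√(a ^ 2 + b ^ 2 + c ^ 2), 0, 0] := by
  obtain ⟨φ, hφs, hφ0⟩ := exists_angle_rotate_onto_axis b c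
  obtain ⟨ψ, hψr, hψ0⟩ := exists_angle_rotate_onto_axis a √(b ^ 2 + c ^ 2)
  have hr : √(a ^ 2 + √(b ^ 2 + c ^ 2) ^ 2) = √(a ^ 2 + b ^ 2 + c ^ 2) := by
    rw [sq_sqrt (by positivity), add_assoc]
  refine ⟨rotation01 ψ * rotation12 φ, mul_mem (rotation01_mem_specialOrthogonalGroup ψ)
    (rotation12_mem_specialOrthogonalGroup φ), ?_⟩
  rw [← mulVec_mulVec, rotation12_mulVec, hφs, hφ0, rotation01_mulVec, hψr, hψ0, hr]

def cyclicShift : Matrix (Fin 3) (Fin 3) ℝ := !![0, 1, 0; 0, 0, 1; 1, 0, 0]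

lemma cyclicShift_mem_specialOrthogonalGroup :
    cyclicShift ∈ specialOrthogonalGroup (Fin 3) ℝ := by
  rw [mem_specialOrthogonalGroup_iff_transpose]
  constructor
  · ext i j; fin_cases i <;> fin_cases j <;>
      simp [cyclicShift, mul_apply, Fin.sum_univ_three]
  · simp [cyclicShift, det_fin_three]

lemma iotaAct_eq_vecCons_mulVec (R : Matrix (Fin 3) (Fin 3) ℝ) (v : Fin 4 → ℝ) :
    iotaAct R v = vecCons (v 0) (R *ᵥ ![v 1, v 2, v 3]) := by
  ext i; fin_cases i <;> simp [iotaAct, mulVec, dotProduct, Fin.sum_univ_three]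

lemma iotaAct_cyclicShift : iotaAct cyclicShift ![0, 1, 0, 0] = ![0, 0, 0, 1] := by
  ext i; fin_cases i <;> simp [iotaAct, cyclicShift]

lemma boostAct_neg_arsinh (a : ℝ) :
    boostAct (-arsinh a) ![a, √(1 + a ^ 2), 0, 0] = ![0, 1, 0, 0] := by
  have h : √(1 + a ^ 2) * √(1 + a ^ 2) = 1 + a ^ 2 := mul_self_sqrt (by positivity)
  ext i; fin_cases i <;> simp [boostAct, cosh_arsinh, sinh_arsinh, h] <;> ring

/-- **Claim 4.29 (hyperbolic regulation).**
For every `v ∈ ℝ⁴` with `Q(v) = v₁² − v₂² − v₃² − v₄² = −1` there are `R, R' ∈ SO(3)` and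
`t ∈ ℝ` with `cosh t ≤ ‖v‖` such that `ι(R')·A(t)·ι(R)·v = (0,0,0,1)`. -/
theorem hyperbolic_regulation (v : Fin 4 → ℝ)
    (hv : v 0 ^ 2 - v 1 ^ 2 - v 2 ^ 2 - v 3 ^ 2 = -1) :
    ∃ (R R' : Matrix (Fin 3) (Fin 3) ℝ) (t : ℝ),
      R.transpose * R = 1 ∧ R.det = 1 ∧
      R'.transpose * R' = 1 ∧ R'.det = 1 ∧
      Real.cosh t ≤ Real.sqrt (∑ i : Fin 4, v i ^ 2) ∧
      iotaAct R' (boostAct t (iotaAct R v)) = ![0, 0, 0, 1] := by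
  have hspace : v 1 ^ 2 + v 2 ^ 2 + v 3 ^ 2 = 1 + v 0 ^ 2 := by linarith
  obtain ⟨R, hR, hRv⟩ := exists_mem_specialOrthogonalGroup_mulVec_eq_sqrt (v 1) (v 2) (v 3)
  rw [hspace] at hRv
  obtain ⟨hRorth, hRdet⟩ := mem_specialOrthogonalGroup_iff_transpose.mp hR
  obtain ⟨hSorth, hSdet⟩ :=
    mem_specialOrthogonalGroup_iff_transpose.mp cyclicShift_mem_specialOrthogonalGroup
  refine ⟨R, cyclicShift, -arsinh (v 0), hRorth, hRdet, hSorth, hSdet, ?_, ?_⟩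
  · rw [cosh_neg, cosh_arsinh, Fin.sum_univ_four]
    exact sqrt_le_sqrt (by nlinarith)
  · rw [iotaAct_eq_vecCons_mulVec R, hRv, boostAct_neg_arsinh, iotaAct_cyclicShift]
end

section
/- Let A ∈ ℤ with A ≡ 1 (mod 8). If integers x₁, x₂, x₃, x₄ satisfy 7·x₁² − x₂² − x₃² − A·x₄² = 0, then x₁ = x₂ = x₃ = x₄ = 0. Equivalently, the quadratic form 7x₁² − x₂² − x₃² − A x₄² has no nonzero rational zero. -/
lemma mod8_evens (a b c d : ZMod 8) (h : 7*a^2 - b^2 - c^2 - d^2 = 0) :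
    ZMod.castHom (show (2:ℕ) ∣ 8 by norm_num) (ZMod 2) a = 0 ∧ ZMod.castHom (show (2:ℕ) ∣ 8 by norm_num) (ZMod 2) b = 0 ∧
    ZMod.castHom (show (2:ℕ) ∣ 8 by norm_num) (ZMod 2) c = 0 ∧ ZMod.castHom (show (2:ℕ) ∣ 8 by norm_num) (ZMod 2) d = 0 := by
  revert h; revert a b c d; decide

lemma descent_key : ∀ n : ℕ, ∀ A x₁ x₂ x₃ x₄ : ℤ, A % 8 = 1 →
    7 * x₁ ^ 2 - x₂ ^ 2 - x₃ ^ 2 - A * x₄ ^ 2 = 0 →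
    x₁.natAbs + x₂.natAbs + x₃.natAbs + x₄.natAbs = n →
    x₁ = 0 ∧ x₂ = 0 ∧ x₃ = 0 ∧ x₄ = 0 := by
  intro n
  induction n using Nat.strong_induction_on with
  | _ n ih =>
    intro A x₁ x₂ x₃ x₄ hA h hn
    rcases Nat.eq_zero_or_pos n with h0 | hpos
    · subst h0
      refine ⟨?_, ?_, ?_, ?_⟩ <;> [skip; skip; skip; skip] <;> omega
    obtain ⟨k, hk⟩ : ∃ k, A = 8*k+1 := ⟨A/8, by omega⟩
    have hA8 : (A : ZMod 8) = 1 := by rw [hk]; push_cast; simp [show (8:ZMod 8) = 0 from rfl]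
    have h8 : (7 : ZMod 8) * (x₁:ZMod 8)^2 - (x₂:ZMod 8)^2 - (x₃:ZMod 8)^2 - (x₄:ZMod 8)^2 = 0 := by
      have := congrArg (fun z : ℤ => (z : ZMod 8)) h
      push_cast at this
      rw [hA8] at this
      linear_combination this
    obtain ⟨e1, e2, e3, e4⟩ := mod8_evens _ _ _ _ h8
    have d1 : (2:ℤ) ∣ x₁ := by
      have hz : ((x₁ : ZMod 2)) = 0 := by simpa using e1
      exact_mod_cast (ZMod.intCast_zmod_eq_zero_iff_dvd _ 2).mp hz
    have d2 : (2:ℤ) ∣ x₂ := by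
      have hz : ((x₂ : ZMod 2)) = 0 := by simpa using e2
      exact_mod_cast (ZMod.intCast_zmod_eq_zero_iff_dvd _ 2).mp hz
    have d3 : (2:ℤ) ∣ x₃ := by
      have hz : ((x₃ : ZMod 2)) = 0 := by simpa using e3
      exact_mod_cast (ZMod.intCast_zmod_eq_zero_iff_dvd _ 2).mp hz
    have d4 : (2:ℤ) ∣ x₄ := by
      have hz : ((x₄ : ZMod 2)) = 0 := by simpa using e4
      exact_mod_cast (ZMod.intCast_zmod_eq_zero_iff_dvd _ 2).mp hz
    obtain ⟨y₁, rfl⟩ := d1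
    obtain ⟨y₂, rfl⟩ := d2
    obtain ⟨y₃, rfl⟩ := d3
    obtain ⟨y₄, rfl⟩ := d4
    have h' : 7 * y₁ ^ 2 - y₂ ^ 2 - y₃ ^ 2 - A * y₄ ^ 2 = 0 := by nlinarith [h]
    have hlt : y₁.natAbs + y₂.natAbs + y₃.natAbs + y₄.natAbs < n := by
      have : (2*y₁).natAbs = 2 * y₁.natAbs := by simp [Int.natAbs_mul]
      have : (2*y₂).natAbs = 2 * y₂.natAbs := by simp [Int.natAbs_mul]
      simp [Int.natAbs_mul] at hn
      omega
    obtain ⟨r1, r2, r3, r4⟩ := ih _ hlt A y₁ y₂ y₃ y₄ hA h' rfl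
    subst r1; subst r2; subst r3; subst r4
    simp

/-- If `A ≡ 1 (mod 8)`, the quadratic form `7x₁² − x₂² − x₃² − A·x₄²` has no nonzero
integer zero. -/
theorem quadratic_form_anisotropic (A : ℤ) (hA : A % 8 = 1) (x₁ x₂ x₃ x₄ : ℤ)
    (h : 7 * x₁ ^ 2 - x₂ ^ 2 - x₃ ^ 2 - A * x₄ ^ 2 = 0) :
    x₁ = 0 ∧ x₂ = 0 ∧ x₃ = 0 ∧ x₄ = 0 := by
  exact descent_key _ A x₁ x₂ x₃ x₄ hA h rfl
end

section
/- Let a < b < c < d be real numbers, and in the hyperbolic upper half-plane ℍ (with its standard hyperbolic metric) let ℓ₁ = {z ∈ ℍ : |z − (a + b)/2| = (b − a)/2} and ℓ₂ = {z ∈ ℍ : |z − (c + d)/2| = (d − c)/2} be the geodesics with boundary endpoints {a, b} and {c, d} respectively. Then, with D = inf{dist(z, w) : z ∈ ℓ₁, w ∈ ℓ₂} the hyperbolic distance between ℓ₁ and ℓ₂, one has sinh(D/2)² = ((c − b)·(d − a))/((b − a)·(d − c)). -/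
/-!
For `z, w ∈ ℍ` one has `sinh (d(z, w) / 2) ^ 2 = |z - w| ^ 2 / (4 Im z Im w)`. If `z` and `w` lie
on circles with real centres `m₁, m₂` and radii `r₁, r₂`, two applications of the reversed
Cauchy–Schwarz inequality `(K² - L²)(r² - p²) ≤ (K r - L p)²` (first moving `z` along its circle,
then `w` along its) give `4 r₁ r₂ sinh (d(z, w) / 2) ^ 2 ≥ (m₂ - m₁)² - (r₁ + r₂)²`, which for the
two geodesics is `(c - b)(d - a)`. Equality holds at the feet of the common perpendicular: the
semicircle centred at the point `e ∈ (b, c)` having the same power `ρ²` with respect to both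
geodesics, and radius `ρ`.
-/

open UpperHalfPlane Real

theorem sq_sub_sq_mul_sq_sub_sq_le_sq (K L r p : ℝ) :
    (K ^ 2 - L ^ 2) * (r ^ 2 - p ^ 2) ≤ (K * r - L * p) ^ 2 := by
  nlinarith [sq_nonneg (K * p - L * r)]

theorem sub_sq_mul_mul_le_of_on_circles {x y u v m₁ m₂ r₁ r₂ : ℝ}
    (hr₁ : 0 ≤ r₁) (hr₂ : 0 ≤ r₂)
    (hz : (x - m₁) ^ 2 + y ^ 2 = r₁ ^ 2) (hw : (u - m₂) ^ 2 + v ^ 2 = r₂ ^ 2) :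
    ((m₂ - m₁) ^ 2 - (r₁ + r₂) ^ 2) * (y * v) ≤ r₁ * r₂ * ((x - u) ^ 2 + (y - v) ^ 2) := by
  have near : (((u - m₁) ^ 2 + v ^ 2 - r₁ ^ 2) ^ 2 + 4 * r₁ ^ 2 * v ^ 2) * y ^ 2
      ≤ (r₁ * ((x - u) ^ 2 + y ^ 2 + v ^ 2)) ^ 2 :=
    calc _ = ((r₁ ^ 2 + (u - m₁) ^ 2 + v ^ 2) ^ 2 - (2 * r₁ * (u - m₁)) ^ 2)
          * (r₁ ^ 2 - (x - m₁) ^ 2) := by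
          linear_combination (((u - m₁) ^ 2 + v ^ 2 - r₁ ^ 2) ^ 2 + 4 * r₁ ^ 2 * v ^ 2) * hz
      _ ≤ _ := sq_sub_sq_mul_sq_sub_sq_le_sq _ _ _ _
      _ = _ := by congr 1; linear_combination (-r₁) * hz
  have far : (((m₂ - m₁) ^ 2 - r₁ ^ 2 - r₂ ^ 2) ^ 2 - 4 * r₁ ^ 2 * r₂ ^ 2) * v ^ 2
      ≤ (r₂ * ((u - m₁) ^ 2 + v ^ 2 - r₁ ^ 2)) ^ 2 :=
    calc _ = (((m₂ - m₁) ^ 2 + r₂ ^ 2 - r₁ ^ 2) ^ 2 - (-2 * (m₂ - m₁) * r₂) ^ 2)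
          * (r₂ ^ 2 - (u - m₂) ^ 2) := by
          linear_combination (((m₂ - m₁) ^ 2 - r₁ ^ 2 - r₂ ^ 2) ^ 2 - 4 * r₁ ^ 2 * r₂ ^ 2) * hw
      _ ≤ _ := sq_sub_sq_mul_sq_sub_sq_le_sq _ _ _ _
      _ = _ := by congr 1; linear_combination (-r₂) * hw
  have hsq : (((m₂ - m₁) ^ 2 - r₁ ^ 2 - r₂ ^ 2) * (y * v)) ^ 2
      ≤ (r₁ * r₂ * ((x - u) ^ 2 + y ^ 2 + v ^ 2)) ^ 2 := by
    nlinarith [mul_le_mul_of_nonneg_left near (sq_nonneg r₂),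
      mul_le_mul_of_nonneg_left far (sq_nonneg y)]
  linear_combination le_of_sq_le_sq hsq (by positivity)

theorem Complex.norm_sub_ofReal_eq_iff {z : ℂ} {m r : ℝ} (hr : 0 ≤ r) :
    ‖z - m‖ = r ↔ (z.re - m) ^ 2 + z.im ^ 2 = r ^ 2 := by
  rw [← sq_eq_sq₀ (norm_nonneg _) hr, Complex.sq_norm, Complex.normSq_apply]
  simp only [Complex.sub_re, Complex.sub_im, Complex.ofReal_re, Complex.ofReal_im, sub_zero, ← sq]

theorem Real.le_of_sinh_sq_le_sinh_sq {x y : ℝ} (hy : 0 ≤ y) (h : sinh x ^ 2 ≤ sinh y ^ 2) :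
    x ≤ y :=
  sinh_le_sinh.1 (le_of_sq_le_sq h (sinh_nonneg_iff.2 hy))

theorem UpperHalfPlane.sinh_half_dist_sq (z w : ℍ) :
    sinh (dist z w / 2) ^ 2 = ((z.re - w.re) ^ 2 + (z.im - w.im) ^ 2) / (4 * (z.im * w.im)) := by
  rw [← (dist_eq_iff_eq_sq_sinh dist_nonneg).1 rfl, Complex.dist_eq_re_im,
    sq_sqrt (by positivity), mul_assoc]
  rfl

theorem UpperHalfPlane.sub_sq_le_mul_sinh_half_dist_sq {z w : ℍ} {m₁ m₂ r₁ r₂ : ℝ}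
    (hz : ‖(z : ℂ) - m₁‖ = r₁) (hw : ‖(w : ℂ) - m₂‖ = r₂) :
    (m₂ - m₁) ^ 2 - (r₁ + r₂) ^ 2 ≤ 4 * (r₁ * r₂) * sinh (dist z w / 2) ^ 2 := by
  have hr₁ : 0 ≤ r₁ := hz ▸ norm_nonneg _
  have hr₂ : 0 ≤ r₂ := hw ▸ norm_nonneg _
  rw [Complex.norm_sub_ofReal_eq_iff hr₁, coe_re, coe_im] at hz
  rw [Complex.norm_sub_ofReal_eq_iff hr₂, coe_re, coe_im] at hw
  have hyv : 0 < 4 * (z.im * w.im) := by have := z.im_pos; have := w.im_pos; positivity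
  rw [sinh_half_dist_sq, mul_div_assoc', le_div_iff₀ hyv]
  linear_combination 4 * sub_sq_mul_mul_le_of_on_circles hr₁ hr₂ hz hw

/-- The point where the semicircle over `p, q` meets the semicircle of radius `ρ` centred at `e`;
the two are orthogonal when `ρ ^ 2 = (e - p) * (e - q)`. -/
noncomputable def orthogonalFoot (p q e ρ : ℝ) : ℂ :=
  ⟨e - 2 * ρ ^ 2 / (2 * e - p - q), (q - p) * ρ / (2 * e - p - q)⟩

theorem norm_orthogonalFoot_sub {p q e ρ : ℝ} (hρ : ρ ^ 2 = (e - p) * (e - q)) (hρ₀ : ρ ≠ 0) :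
    ‖orthogonalFoot p q e ρ - ((p + q) / 2 : ℝ)‖ = |q - p| / 2 := by
  rw [Complex.norm_sub_ofReal_eq_iff (by positivity), div_pow, sq_abs]
  have hα : e * 2 - p - q ≠ 0 := by
    rw [← sq_pos_iff, show (e * 2 - p - q) ^ 2 = (q - p) ^ 2 + 4 * ρ ^ 2 by rw [hρ]; ring]
    positivity
  simp only [orthogonalFoot, div_pow, mul_pow, hρ]
  field_simp
  ring

theorem exists_between_sub_mul_sub_eq {a b c d : ℝ} (hab : a < b) (hbc : b < c) (hcd : c < d) :
    ∃ e, b < e ∧ e < c ∧ (e - a) * (e - b) = (e - c) * (e - d) := by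
  have hs : 0 < c + d - a - b := by linarith
  refine ⟨(c * d - a * b) / (c + d - a - b), ?_, ?_, ?_⟩
  · rw [lt_div_iff₀ hs]; nlinarith
  · rw [div_lt_iff₀ hs]; nlinarith
  · field_simp; ring

theorem exists_sinh_half_dist_sq_eq {a b c d : ℝ} (hab : a < b) (hbc : b < c) (hcd : c < d) :
    ∃ z w : ℍ, ‖(z : ℂ) - (((a + b) / 2 : ℝ) : ℂ)‖ = (b - a) / 2 ∧
      ‖(w : ℂ) - (((c + d) / 2 : ℝ) : ℂ)‖ = (d - c) / 2 ∧
      sinh (dist z w / 2) ^ 2 = (c - b) * (d - a) / ((b - a) * (d - c)) := by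
  obtain ⟨e, hbe, hec, he⟩ := exists_between_sub_mul_sub_eq hab hbc hcd
  set ρ := √((e - a) * (e - b))
  have hρ : 0 < ρ := sqrt_pos.2 (by nlinarith)
  have hρab : ρ ^ 2 = (e - a) * (e - b) := sq_sqrt (by nlinarith)
  have hρcd : (-ρ) ^ 2 = (e - c) * (e - d) := by rw [neg_sq, hρab, he]
  let z : ℍ := mk (orthogonalFoot a b e ρ) <| by
    simp only [orthogonalFoot]
    exact div_pos (by nlinarith) (by linarith)
  let w : ℍ := mk (orthogonalFoot c d e (-ρ)) <| by
    simp only [orthogonalFoot]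
    exact div_pos_of_neg_of_neg (by nlinarith) (by linarith)
  refine ⟨z, w, ?_, ?_, ?_⟩
  · rw [coe_mk, norm_orthogonalFoot_sub hρab hρ.ne', abs_of_pos (by linarith)]
  · rw [coe_mk, norm_orthogonalFoot_sub hρcd (neg_ne_zero.2 hρ.ne'), abs_of_pos (by linarith)]
  · rw [sinh_half_dist_sq]
    simp only [z, w, mk_re, mk_im, orthogonalFoot]
    have : e * 2 - a - b ≠ 0 := by linarith
    have : e * 2 - c - d ≠ 0 := by linarith
    have : b - a ≠ 0 := by linarith
    have : d - c ≠ 0 := by linarith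
    field_simp
    linear_combination (-4 * ρ ^ 2 * (a + b - c - d) * (e * 2 - c - d)) * hρab
      + (4 * ρ ^ 2 * (a + b - c - d) * (e * 2 - a - b)) * hρcd

/-- **Claim 5.20 (hyperbolic distance between disjoint geodesics via the cross ratio).**
For `a < b < c < d`, let `ℓ₁, ℓ₂ ⊆ ℍ` be the geodesic semicircles with endpoints `{a, b}`
and `{c, d}` respectively, and let `D` be the hyperbolic distance between them.  Then
`sinh(D/2)² = ((c−b)(d−a))/((b−a)(d−c))`. -/
theorem sinh_half_dist_between_geodesics (a b c d : ℝ) (hab : a < b) (hbc : b < c)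
    (hcd : c < d) :
    Real.sinh (sInf {r : ℝ |
        ∃ z : UpperHalfPlane, ‖(z : ℂ) - (((a + b) / 2 : ℝ) : ℂ)‖ = (b - a) / 2 ∧
        ∃ w : UpperHalfPlane, ‖(w : ℂ) - (((c + d) / 2 : ℝ) : ℂ)‖ = (d - c) / 2 ∧
          r = dist z w} / 2) ^ 2
      = (c - b) * (d - a) / ((b - a) * (d - c)) := by
  obtain ⟨z₀, w₀, hz₀, hw₀, hzw₀⟩ := exists_sinh_half_dist_sq_eq hab hbc hcd
  convert hzw₀ using 4
  apply IsLeast.csInf_eq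
  refine ⟨⟨z₀, hz₀, w₀, hw₀, rfl⟩, ?_⟩
  rintro _ ⟨z, hz, w, hw, rfl⟩
  have hbound := sub_sq_le_mul_sinh_half_dist_sq hz hw
  have hX : sinh (dist z₀ w₀ / 2) ^ 2 ≤ sinh (dist z w / 2) ^ 2 := by
    rw [hzw₀, div_le_iff₀ (by nlinarith)]
    linear_combination hbound
  linarith [le_of_sinh_sq_le_sinh_sq (by positivity) hX]
end

section
/- Let X be a locally compact second-countable Hausdorff space carrying two jointly continuous flows (a_t)_{t∈ℝ} and (u_s)_{s∈ℝ} by homeomorphisms satisfying a_t ∘ u_s = u_{e^t·s} ∘ a_t for all t, s ∈ ℝ. Let μ be a Borel probability measure on X that is invariant under a_t for all t and ergodic for the flow (a_t) (every Borel set E with a_t⁻¹(E) = E for all t has μ(E) ∈ {0, 1}). Then exactly one of the following holds: either for μ-almost every x ∈ X one has u_s(x) ≠ x for all s ≠ 0 (μ is u-free), or for μ-almost every x ∈ X one has u_s(x) = x for all s ∈ ℝ. -/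
open MeasureTheory Set

theorem aux_isClosed {X : Type*} [TopologicalSpace X] [T2Space X]
    (u : ℝ → X → X) (hu_cont : Continuous fun p : ℝ × X => u p.1 p.2) (ε c : ℝ) :
    IsClosed {x : X | ∃ s, s ∈ Icc ε c ∧ u s x = x} := by
  have : {x : X | ∃ s, s ∈ Icc ε c ∧ u s x = x} =
      Prod.snd '' {p : (Icc ε c) × X | u p.1 p.2 = p.2} := by
    ext x
    constructor
    · rintro ⟨s, hs, hx⟩; exact ⟨⟨⟨s, hs⟩, x⟩, hx, rfl⟩
    · rintro ⟨⟨⟨s, hs⟩, y⟩, hp, rfl⟩; exact ⟨s, hs, hp⟩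
  rw [this]
  have : CompactSpace (Icc ε c) := isCompact_iff_compactSpace.mp isCompact_Icc
  apply isClosedMap_snd_of_compactSpace
  have h1 : Continuous fun p : (Icc ε c) × X => u p.1 p.2 := by
    have : (fun p : (Icc ε c) × X => u p.1 p.2) =
        (fun p : ℝ × X => u p.1 p.2) ∘ (fun p : (Icc ε c) × X => ((p.1 : ℝ), p.2)) := rfl
    rw [this]
    exact hu_cont.comp (by fun_prop)
  exact isClosed_eq h1 continuous_snd

/-- A point with arbitrarily small positive periods is fixed by the whole flow. -/
theorem aux_dense {X : Type*} [TopologicalSpace X] [T2Space X]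
    (u : ℝ → X → X) (x : X) (hcont : Continuous fun s : ℝ => u s x)
    (hu_zero : ∀ y, u 0 y = y) (hu_add : ∀ s s' y, u (s + s') y = u s (u s' y))
    (hper : ∀ n : ℕ, ∃ p, 0 < p ∧ p ≤ 1 / (n + 1 : ℝ) ∧ u p x = x) :
    ∀ s : ℝ, u s x = x := by
  have hS : IsClosed {s : ℝ | u s x = x} := isClosed_eq hcont continuous_const
  have hnat : ∀ p, u p x = x → ∀ k : ℕ, u (k * p) x = x := by
    intro p hp k
    induction k with
    | zero => simpa using hu_zero x
    | succ k ih =>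
      have h2 : ((k + 1 : ℕ) : ℝ) * p = (k : ℝ) * p + p := by push_cast; ring
      have h3 := hu_add ((k : ℝ) * p) p x
      rw [hp] at h3
      rw [h2, h3, ih]
  have key : ∀ s : ℝ, 0 ≤ s → u s x = x := by
    intro s hs
    have hmem : s ∈ closure {s : ℝ | u s x = x} := by
      rw [Metric.mem_closure_iff]
      intro ε hε
      obtain ⟨n, hn⟩ := exists_nat_one_div_lt hε
      obtain ⟨p, hp0, hp1, hpx⟩ := hper n
      refine ⟨(⌊s / p⌋₊ : ℝ) * p, hnat p hpx _, ?_⟩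
      have h1 : (⌊s / p⌋₊ : ℝ) * p ≤ s := by
        rw [← le_div_iff₀ hp0]
        exact Nat.floor_le (div_nonneg hs hp0.le)
      have h2 : s < (⌊s / p⌋₊ : ℝ) * p + p := by
        have h4 := Nat.lt_floor_add_one (s / p)
        calc s = (s / p) * p := by field_simp
          _ < ((⌊s / p⌋₊ : ℝ) + 1) * p := by
              exact mul_lt_mul_of_pos_right h4 hp0
          _ = (⌊s / p⌋₊ : ℝ) * p + p := by ring
      rw [Real.dist_eq, abs_sub_lt_iff]
      constructor
      · linarith
      · linarith
    rwa [hS.closure_eq] at hmem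
  intro s
  rcases le_or_gt 0 s with hs | hs
  · exact key s hs
  · have hneg : u (-s) x = x := key (-s) (by linarith)
    have h := hu_add s (-s) x
    rw [add_neg_cancel, hu_zero, hneg] at h
    exact h.symm

/-- **Claim 4.1 (Almost no periods).**
Let `X` be a locally compact second-countable Hausdorff space carrying jointly continuous
flows `a` and `u` satisfying `a t ∘ u s = u (eᵗ·s) ∘ a t`, and let `μ` be an `a`-invariant
ergodic Borel probability measure.  Then exactly one of the following holds: either `μ` is
`u`-free (for `μ`-a.e. `x`, `u s x ≠ x` for all `s ≠ 0`), or for `μ`-a.e. `x`,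
`u s x = x` for all `s`. -/
theorem almost_no_periods
    {X : Type*} [TopologicalSpace X] [LocallyCompactSpace X] [SecondCountableTopology X]
    [T2Space X] [MeasurableSpace X] [BorelSpace X]
    (a u : ℝ → X → X)
    (ha_cont : Continuous fun p : ℝ × X => a p.1 p.2)
    (hu_cont : Continuous fun p : ℝ × X => u p.1 p.2)
    (ha_zero : ∀ x, a 0 x = x) (ha_add : ∀ t t' x, a (t + t') x = a t (a t' x))
    (hu_zero : ∀ x, u 0 x = x) (hu_add : ∀ s s' x, u (s + s') x = u s (u s' x))
    (hcomm : ∀ t s x, a t (u s x) = u (Real.exp t * s) (a t x))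
    (μ : Measure X) [IsProbabilityMeasure μ]
    (hμa : ∀ t : ℝ, Measure.map (a t) μ = μ)
    (herg : ∀ E : Set X, MeasurableSet E → (∀ t : ℝ, a t ⁻¹' E = E) → μ E = 0 ∨ μ E = 1) :
    Xor' (∀ᵐ x ∂μ, ∀ s : ℝ, s ≠ 0 → u s x ≠ x) (∀ᵐ x ∂μ, ∀ s : ℝ, u s x = x) := by
  -- basic facts
  have hu_pt : ∀ x, Continuous fun s : ℝ => u s x := fun x =>
    hu_cont.comp (continuous_id.prodMk continuous_const)
  have hu_pt2 : ∀ s : ℝ, Continuous fun x => u s x := fun s =>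
    hu_cont.comp (continuous_const.prodMk continuous_id)
  have ha_ct : ∀ t : ℝ, Continuous (a t) := fun t =>
    ha_cont.comp (continuous_const.prodMk continuous_id)
  have ha_meas : ∀ t : ℝ, Measurable (a t) := fun t => (ha_ct t).measurable
  have ha_inj : ∀ t : ℝ, Function.Injective (a t) := by
    intro t x y h
    have hx := ha_add (-t) t x
    have hy := ha_add (-t) t y
    rw [neg_add_cancel, ha_zero] at hx hy
    rw [hx, hy, h]
  have hper_neg : ∀ (p : ℝ) (x : X), u p x = x → u (-p) x = x := by
    intro p x hp
    have h := hu_add (-p) p x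
    rw [neg_add_cancel, hu_zero, hp] at h
    exact h.symm
  have hu_shift : ∀ (t s : ℝ) (x : X), u s (a t x) = a t (u (Real.exp (-t) * s) x) := by
    intro t s x
    rw [hcomm, ← mul_assoc, ← Real.exp_add, add_neg_cancel, Real.exp_zero, one_mul]
  -- the fixed-point set E
  set E : Set X := {x | ∀ s : ℝ, u s x = x} with hE_def
  have hE_closed : IsClosed E := by
    have : E = ⋂ s : ℝ, {x | u s x = x} := by ext x; simp [hE_def]
    rw [this]
    exact isClosed_iInter fun s => isClosed_eq (hu_pt2 s) continuous_id
  have hE_meas : MeasurableSet E := hE_closed.measurableSet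
  have hE_inv : ∀ t : ℝ, a t ⁻¹' E = E := by
    intro t
    ext x
    simp only [mem_preimage, hE_def, mem_setOf_eq]
    constructor
    · intro h s
      have h1 := h (Real.exp t * s)
      rw [← hcomm] at h1
      exact ha_inj t h1
    · intro h s
      rw [hu_shift, h]
  -- the sets A c of points with a period in (0, c]
  set A : ℝ → Set X := fun c => {x | ∃ s : ℝ, 0 < s ∧ s ≤ c ∧ u s x = x} with hA_def
  have hA_mono : ∀ c c' : ℝ, c ≤ c' → A c ⊆ A c' := by
    rintro c c' hcc x ⟨s, h1, h2, h3⟩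
    exact ⟨s, h1, h2.trans hcc, h3⟩
  have hA_meas : ∀ c : ℝ, 0 < c → MeasurableSet (A c) := by
    intro c hc
    have : A c = ⋃ n : ℕ, {x : X | ∃ s, s ∈ Icc (min (1 / (n + 1 : ℝ)) c) c ∧ u s x = x} := by
      ext x
      simp only [hA_def, mem_setOf_eq, mem_iUnion, mem_Icc]
      constructor
      · rintro ⟨s, h1, h2, h3⟩
        obtain ⟨n, hn⟩ := exists_nat_one_div_lt h1
        exact ⟨n, s, ⟨le_trans (min_le_left _ _) hn.le, h2⟩, h3⟩
      · rintro ⟨n, s, ⟨h1, h2⟩, h3⟩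
        refine ⟨s, lt_of_lt_of_le ?_ h1, h2, h3⟩
        exact lt_min (by positivity) hc
    rw [this]
    exact MeasurableSet.iUnion fun n => (aux_isClosed u hu_cont _ _).measurableSet
  have hA_pre : ∀ (t c : ℝ), a t ⁻¹' A c = A (Real.exp (-t) * c) := by
    intro t c
    ext x
    simp only [mem_preimage, hA_def, mem_setOf_eq]
    constructor
    · rintro ⟨s, h1, h2, h3⟩
      rw [hu_shift] at h3
      refine ⟨Real.exp (-t) * s, by positivity, ?_, ?_⟩
      · exact mul_le_mul_of_nonneg_left h2 (Real.exp_nonneg _)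
      · have h4 : a t (u (Real.exp (-t) * s) x) = a t x := h3
        exact ha_inj t h4
    · rintro ⟨s', h1, h2, h3⟩
      refine ⟨Real.exp t * s', by positivity, ?_, ?_⟩
      · calc Real.exp t * s' ≤ Real.exp t * (Real.exp (-t) * c) :=
              mul_le_mul_of_nonneg_left h2 (Real.exp_nonneg _)
          _ = c := by rw [← mul_assoc, ← Real.exp_add, add_neg_cancel, Real.exp_zero, one_mul]
      · rw [hu_shift, ← mul_assoc, ← Real.exp_add, neg_add_cancel, Real.exp_zero, one_mul, h3]
  have hμ_pre : ∀ (t : ℝ) (S : Set X), MeasurableSet S → μ (a t ⁻¹' S) = μ S := by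
    intro t S hS
    conv_rhs => rw [← hμa t]
    rw [Measure.map_apply (ha_meas t) hS]
  have hA_const : ∀ c c' : ℝ, 0 < c → 0 < c' → μ (A c') = μ (A c) := by
    intro c c' hc hc'
    have ht : Real.exp (-(Real.log c - Real.log c')) * c = c' := by
      rw [neg_sub, Real.exp_sub, Real.exp_log hc', Real.exp_log hc]
      field_simp
    calc μ (A c') = μ (A (Real.exp (-(Real.log c - Real.log c')) * c)) := by rw [ht]
      _ = μ (a (Real.log c - Real.log c') ⁻¹' A c) := by rw [hA_pre]
      _ = μ (A c) := hμ_pre _ _ (hA_meas c hc)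
  -- μ P = μ E
  set P : Set X := ⋃ n : ℕ, A (n + 1 : ℝ) with hP_def
  have hP_eq : μ P = μ (A 1) := by
    rw [hP_def, Monotone.measure_iUnion]
    · have : ∀ n : ℕ, μ (A (n + 1 : ℝ)) = μ (A 1) := fun n =>
        hA_const 1 _ one_pos (by positivity)
      simp only [this, iSup_const]
    · intro m n hmn
      have := (Nat.cast_le (α := ℝ)).mpr hmn
      exact hA_mono _ _ (by linarith)
  have hE_eq : E = ⋂ n : ℕ, A (1 / (n + 1 : ℝ)) := by
    ext x
    simp only [hE_def, mem_setOf_eq, mem_iInter, hA_def]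
    constructor
    · intro h n
      exact ⟨1 / (n + 1 : ℝ), by positivity, le_refl _, h _⟩
    · intro h
      exact aux_dense u x (hu_pt x) hu_zero hu_add fun n => h n
  have hEμ_eq : μ E = μ (A 1) := by
    rw [hE_eq, Antitone.measure_iInter]
    · have : ∀ n : ℕ, μ (A (1 / (n + 1 : ℝ))) = μ (A 1) := fun n =>
        hA_const 1 _ one_pos (by positivity)
      simp only [this, iInf_const]
    · intro m n hmn
      apply hA_mono
      apply one_div_le_one_div_of_le (by positivity)
      have := (Nat.cast_le (α := ℝ)).mpr hmn
      linarith
    · exact fun n => (hA_meas _ (by positivity)).nullMeasurableSet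
    · exact ⟨0, measure_ne_top μ _⟩
  -- membership in P from a nonzero period
  have hmemP : ∀ x : X, (∃ s : ℝ, s ≠ 0 ∧ u s x = x) → x ∈ P := by
    rintro x ⟨s, hs, hx⟩
    have : ∃ s : ℝ, 0 < s ∧ u s x = x := by
      rcases lt_or_gt_of_ne hs with h | h
      · exact ⟨-s, by linarith, hper_neg s x hx⟩
      · exact ⟨s, h, hx⟩
    obtain ⟨s', hs', hx'⟩ := this
    rw [hP_def, mem_iUnion]
    refine ⟨⌈s'⌉₊, s', hs', ?_, hx'⟩
    calc s' ≤ (⌈s'⌉₊ : ℝ) := Nat.le_ceil s'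
      _ ≤ (⌈s'⌉₊ : ℝ) + 1 := by linarith
  -- conclude
  rcases herg E hE_meas hE_inv with h0 | h1
  · -- μ E = 0 : u-free case
    have hP0 : μ P = 0 := by rw [hP_eq, ← hEμ_eq, h0]
    refine Or.inl ⟨?_, ?_⟩
    · rw [ae_iff]
      refine measure_mono_null ?_ hP0
      intro x hx
      simp only [mem_setOf_eq] at hx
      push_neg at hx
      obtain ⟨s, hs, hx'⟩ := hx
      exact hmemP x ⟨s, hs, hx'⟩
    · intro hright
      rw [ae_iff] at hright
      have : {x : X | ¬∀ s : ℝ, u s x = x} = Eᶜ := by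
        ext x; simp [hE_def]
      rw [this] at hright
      rw [prob_compl_eq_zero_iff hE_meas] at hright
      rw [h0] at hright
      exact zero_ne_one hright
  · -- μ E = 1 : fixed case
    have hright : ∀ᵐ x ∂μ, ∀ s : ℝ, u s x = x := by
      rw [ae_iff]
      have : {x : X | ¬∀ s : ℝ, u s x = x} = Eᶜ := by
        ext x; simp [hE_def]
      rw [this]
      exact (prob_compl_eq_zero_iff hE_meas).mpr h1
    refine Or.inr ⟨hright, ?_⟩
    intro hleft
    haveI : (ae μ).NeBot := ae_neBot.mpr (IsProbabilityMeasure.ne_zero μ)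
    obtain ⟨x, hx1, hx2⟩ := (hleft.and hright).exists
    exact hx1 1 one_ne_zero (hx2 1)
end

section
/- Let G = SL₂(ℂ) with its matrix topology, let H ≤ G be the subgroup of matrices with real entries (a copy of SL₂(ℝ)), let Γ ≤ G be a discrete subgroup, and let g ∈ G. Suppose the set H·g·Γ is closed in G (equivalently, the SL₂(ℝ)-orbit of the coset gΓ is closed in G/Γ). Then the image of the set Γ·g⁻¹ = {γ·g⁻¹ : γ ∈ Γ} under the quotient map G → G/H (left cosets xH, with the quotient topology) is a discrete subset of G/H: every point of this image has a neighborhood in G/H containing no other point of the image. -/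
open Matrix

/-- The subspace topology on `SL₂(ℂ)` induced from the matrix topology. -/
noncomputable instance : TopologicalSpace (Matrix.SpecialLinearGroup (Fin 2) ℂ) :=
  TopologicalSpace.induced (fun g => (g : Matrix (Fin 2) (Fin 2) ℂ)) inferInstance

/-- The subgroup of `SL₂(ℂ)` consisting of matrices with real entries
(a copy of `SL₂(ℝ)`). -/
noncomputable def realSL2 : Subgroup (Matrix.SpecialLinearGroup (Fin 2) ℂ) where
  carrier := {g | ∀ i j, ((g : Matrix (Fin 2) (Fin 2) ℂ) i j).im = 0}
  one_mem' := by
    intro i j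
    fin_cases i <;> fin_cases j <;>
      simp [Matrix.SpecialLinearGroup.coe_one, Matrix.one_apply]
  mul_mem' := by
    intro a b ha hb i j
    simp only [Matrix.SpecialLinearGroup.coe_mul, Matrix.mul_apply, Fin.sum_univ_two,
      Complex.add_im, Complex.mul_im]
    rw [ha i 0, ha i 1, hb 0 j, hb 1 j]
    ring
  inv_mem' := by
    intro a ha i j
    rw [Matrix.SpecialLinearGroup.SL2_inv_expl a]
    fin_cases i <;> fin_cases j <;>
      simp only [Matrix.cons_val', Matrix.cons_val_zero, Matrix.cons_val_one, Matrix.head_cons,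
        Matrix.head_fin_const, Matrix.empty_val', Matrix.cons_val_fin_one, Complex.neg_im] <;>
      simp [ha 0 0, ha 0 1, ha 1 0, ha 1 1]

/-!
Since `Γ` is discrete in the second countable group `G`, it is countable, so the closed set
`H g Γ` is the countable union of the closed cosets `H g γ`. A closed subset of the locally
compact group `G` is a Baire space, hence some `H g γ₁` contains a nonempty relatively open
piece of `H g Γ`. Translating by `H` on the left and by `Γ` on the right, `H g` itself is
relatively open in `H g Γ`: there is a neighbourhood `W` of `g` such that `h g γ ∈ W` forces
`g γ g⁻¹ ∈ H`. Then `γ₀ W⁻¹ H` is an open neighbourhood of `γ₀ g⁻¹ H` in `G ⧸ H` that meets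
`Γ g⁻¹ H` only in that point.
-/

open Set

lemma exists_isOpen_inter_subset_of_subset_iUnion {X ι : Type*} [TopologicalSpace X] [Countable ι]
    {S : Set X} [BaireSpace S] (hS : S.Nonempty) {F : ι → Set X} (hF : ∀ i, IsClosed (F i))
    (hSF : S ⊆ ⋃ i, F i) :
    ∃ i, ∃ V, IsOpen V ∧ (V ∩ S).Nonempty ∧ V ∩ S ⊆ F i := by
  have : Nonempty S := hS.to_subtype
  obtain ⟨i, p, hp⟩ := nonempty_interior_of_iUnion_of_closed
    (fun i => (hF i).preimage continuous_subtype_val)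
    (iUnion_eq_univ_iff.2 fun x => by simpa using hSF x.2)
  obtain ⟨O, hOF, hO, hpO⟩ := mem_interior.1 hp
  obtain ⟨V, hV, rfl⟩ := isOpen_induced_iff.1 hO
  exact ⟨i, V, hV, ⟨p, hpO, p.2⟩, fun x hx => @hOF ⟨x, hx.2⟩ hx.1⟩

section DoubleCoset

variable {G : Type*} [Group G] [TopologicalSpace G] {H Γ : Subgroup G} {g : G}

lemma exists_isOpen_forall_conj_mem_of_isClosed_doubleCoset [IsTopologicalGroup G]
    [LocallyCompactSpace G] [Countable Γ] (hH : IsClosed (H : Set G))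
    (hS : IsClosed {x | ∃ h ∈ H, ∃ γ ∈ Γ, x = h * g * γ}) :
    ∃ W, IsOpen W ∧ g ∈ W ∧ ∀ h ∈ H, ∀ γ ∈ Γ, h * g * γ ∈ W → g * γ * g⁻¹ ∈ H := by
  set S := {x | ∃ h ∈ H, ∃ γ ∈ Γ, x = h * g * γ}
  have : LocallyCompactSpace S := hS.isClosedEmbedding_subtypeVal.locallyCompactSpace
  obtain ⟨γ₁, V, hV, ⟨p, hpV, hpS⟩, hVS⟩ := exists_isOpen_inter_subset_of_subset_iUnion (S := S)
      (F := fun γ : Γ => (· * (g * γ)⁻¹) ⁻¹' H)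
      ⟨g, 1, H.one_mem, 1, Γ.one_mem, by simp⟩
      (fun γ => hH.preimage (continuous_mul_const _))
      (fun _ ⟨h, hh, γ, hγ, hx⟩ => mem_iUnion.2 ⟨⟨γ, hγ⟩, by simpa [hx, mul_assoc] using hh⟩)
  set h₁ := p * (g * γ₁)⁻¹
  have hh₁ : h₁ ∈ H := hVS ⟨hpV, hpS⟩
  refine ⟨(fun y => h₁ * y * γ₁) ⁻¹' V, hV.preimage (by fun_prop),
    by simpa [h₁, mul_assoc] using hpV, ?_⟩
  intro h hh γ hγ hW
  have hS' : h₁ * (h * g * γ) * γ₁ ∈ S :=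
    ⟨h₁ * h, H.mul_mem hh₁ hh, γ * γ₁, Γ.mul_mem hγ γ₁.2, by group⟩
  have hmem : h₁ * (h * g * γ) * γ₁ * (g * γ₁)⁻¹ ∈ H := hVS ⟨hW, hS'⟩
  convert H.mul_mem (H.inv_mem (H.mul_mem hh₁ hh)) hmem using 1
  group

lemma exists_isOpen_quotient_forall_eq_of_forall_conj_mem [IsTopologicalGroup G] {W : Set G}
    (hW : IsOpen W) (hgW : g ∈ W) (hconj : ∀ h ∈ H, ∀ γ ∈ Γ, h * g * γ ∈ W → g * γ * g⁻¹ ∈ H)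
    {γ₀ : G} (hγ₀ : γ₀ ∈ Γ) :
    ∃ U : Set (G ⧸ H), IsOpen U ∧ γ₀ * g⁻¹ ∈ ((↑) : G → G ⧸ H) ⁻¹' U ∧
      ∀ γ ∈ Γ, ((γ * g⁻¹ : G) : G ⧸ H) ∈ U → ((γ * g⁻¹ : G) : G ⧸ H) = γ₀ * g⁻¹ := by
  refine ⟨(↑) '' ((fun x => x⁻¹ * γ₀) ⁻¹' W),
    QuotientGroup.isOpenMap_coe _ (hW.preimage (by fun_prop)),
    mem_image_of_mem _ (by simpa using hgW), ?_⟩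
  rintro γ hγ ⟨a, ha, hag⟩
  have hmem : a⁻¹ * (γ * g⁻¹) ∈ H := QuotientGroup.eq.1 hag
  have := hconj _ hmem (γ⁻¹ * γ₀) (Γ.mul_mem (Γ.inv_mem hγ) hγ₀) (by simpa [mul_assoc] using ha)
  exact QuotientGroup.eq.2 (by simpa [mul_assoc] using this)

end DoubleCoset

/- Instance search sees neither through `Matrix` to the product topology nor through the topology
on `SL₂(ℂ)` above (a separate instance, equal to Mathlib's subtype topology only up to
unfolding), so these instances are restated. -/

instance : IsTopologicalGroup (SpecialLinearGroup (Fin 2) ℂ) :=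
  SpecialLinearGroup.topologicalGroup

instance : LocallyCompactSpace (Matrix (Fin 2) (Fin 2) ℂ) :=
  inferInstanceAs (LocallyCompactSpace (Fin 2 → Fin 2 → ℂ))

instance : SecondCountableTopology (Matrix (Fin 2) (Fin 2) ℂ) :=
  inferInstanceAs (SecondCountableTopology (Fin 2 → Fin 2 → ℂ))

instance : LocallyCompactSpace (SpecialLinearGroup (Fin 2) ℂ) :=
  SpecialLinearGroup.isClosedEmbedding_val.locallyCompactSpace

instance : SecondCountableTopology (SpecialLinearGroup (Fin 2) ℂ) :=
  SpecialLinearGroup.isClosedEmbedding_val.isInducing.secondCountableTopology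

lemma isClosed_realSL2 : IsClosed (realSL2 : Set (SpecialLinearGroup (Fin 2) ℂ)) := by
  have : (realSL2 : Set (SpecialLinearGroup (Fin 2) ℂ)) = ⋂ (i) (j), {x | (x i j).im = 0} := by
    ext; simp [realSL2]
  rw [this]
  exact isClosed_iInter fun i => isClosed_iInter fun j => isClosed_eq (by fun_prop) continuous_const

/-- **Claim 4.26 (discreteness of `Γ·(g⁻¹·w₀)`).**
Let `G = SL₂(ℂ)`, let `H ≤ G` be the subgroup of real matrices, let `Γ ≤ G` be a discrete
subgroup and `g ∈ G`.  If `H·g·Γ` is closed in `G`, then the image of `Γ·g⁻¹` in `G/H`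
is discrete: each of its points has an open neighborhood containing no other point of the
image. -/
theorem discreteness_of_orbit
    (Γ : Subgroup (Matrix.SpecialLinearGroup (Fin 2) ℂ)) (hΓ : DiscreteTopology Γ)
    (g : Matrix.SpecialLinearGroup (Fin 2) ℂ)
    (hclosed : IsClosed {x : Matrix.SpecialLinearGroup (Fin 2) ℂ |
      ∃ h ∈ realSL2, ∃ γ ∈ Γ, x = h * g * γ}) :
    ∀ γ₀ ∈ Γ, ∃ U : Set (Matrix.SpecialLinearGroup (Fin 2) ℂ ⧸ realSL2),
      IsOpen U ∧ (γ₀ * g⁻¹ : Matrix.SpecialLinearGroup (Fin 2) ℂ) ∈ (QuotientGroup.mk ⁻¹' U) ∧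
      ∀ γ ∈ Γ, (QuotientGroup.mk (γ * g⁻¹) : Matrix.SpecialLinearGroup (Fin 2) ℂ ⧸ realSL2) ∈ U →
        (QuotientGroup.mk (γ * g⁻¹) : Matrix.SpecialLinearGroup (Fin 2) ℂ ⧸ realSL2)
          = QuotientGroup.mk (γ₀ * g⁻¹) := by
  intro γ₀ hγ₀
  have : Countable Γ := TopologicalSpace.separableSpace_iff_countable.1 inferInstance
  obtain ⟨W, hW, hgW, hconj⟩ :=
    exists_isOpen_forall_conj_mem_of_isClosed_doubleCoset isClosed_realSL2 hclosed
  exact exists_isOpen_quotient_forall_eq_of_forall_conj_mem hW hgW hconj hγ₀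
end
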